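/- arXiv:0812.3369 — 6 statements merged into one kernel-verified Lean document; each statement's English description precedes it below -/
import Mathlib

section
/- Let ω = Σ_{i=0}^{3} Fᵢ dzᵢ define a degree d reduced foliation on P³ whose tangent sheaf splits as O(a) ⊕ O(b) with a ≤ b ≤ −1 and a + b = 2 − d. Then every linear syzygy ℓ₀F₀ + ℓ₁F₁ + ℓ₂F₂ + ℓ₃F₃ = 0 (ℓᵢ linear forms) is a scalar multiple of the Euler relation, i.e. (ℓ₀,…,ℓ₃) = λ(z₀,…,z₃) for some λ ∈ C. Consequently, any foliation ω' = Σ Fᵢ' dzᵢ with the same singular scheme satisfies ω' = λω with λ ∈ C*. -/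
open MvPolynomial

/-! Codimension one holomorphic foliations on `ℙ³`, in algebraic form.
A degree `d` codimension one foliation is given by a projective `1`-form
`ω = ∑ Fᵢ dzᵢ` where the `Fᵢ ∈ ℂ[z₀,…,z₃]` are homogeneous of degree `d+1`,
satisfy the Euler relation `∑ zᵢFᵢ = 0`, the integrability condition
`ω ∧ dω = 0`, and the common zero scheme (the singular scheme `Z`) has
codimension at least two.  The tangent sheaf `𝓕` of the foliation is the
kernel of `Tℙ³ → 𝓘_Z(d+2)`; combining this with the Euler sequence,
`𝓕 ⊕ 𝓞` is the sheaf associated with the graded module of syzygies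
`Syz F = {(ℓ₀,…,ℓ₃) : ∑ ℓᵢFᵢ = 0}` (twisted by `1`), so that `𝓕` is
locally free (resp. splits as a sum of line bundles) iff `Syz F` is locally
free at all relevant homogeneous primes (resp. is a free module). -/

noncomputable section

local notation "R4" => MvPolynomial (Fin 4) ℂ

/-- The Euler relation `∑ zᵢ Fᵢ = 0`. -/
def EulerRel (F : Fin 4 → R4) : Prop := ∑ i, X i * F i = 0

/-- The integrability condition `ω ∧ dω = 0` for `ω = ∑ Fᵢ dzᵢ`, written out
in coefficients. -/
def IntegrableForm (F : Fin 4 → R4) : Prop :=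
  ∀ i j k : Fin 4,
    F i * (pderiv j (F k) - pderiv k (F j)) +
    F j * (pderiv k (F i) - pderiv i (F k)) +
    F k * (pderiv i (F j) - pderiv j (F i)) = 0

/-- The singular scheme `{F₀ = ⋯ = F₃ = 0}` has codimension at least two:
the `Fᵢ` have no common prime factor. -/
def CodimGE2 (F : Fin 4 → R4) : Prop := ¬ ∃ p : R4, Prime p ∧ ∀ i, p ∣ F i

/-- `ω = ∑ Fᵢ dzᵢ` defines a degree `d` codimension one foliation on `ℙ³`
with singular scheme of codimension at least two. -/
def IsFoliation (d : ℕ) (F : Fin 4 → R4) : Prop :=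
  (∀ i, (F i).IsHomogeneous (d + 1)) ∧ EulerRel F ∧ IntegrableForm F ∧ CodimGE2 F

/-- The saturation `I^sat = ⋃ₗ (I : (z₀,…,z₃)ˡ)` of an ideal of
`ℂ[z₀,…,z₃]`. -/
def satIdeal (I : Ideal R4) : Ideal R4 :=
  ⨆ l : ℕ, I.colon (((Ideal.span (Set.range (X : Fin 4 → R4))) ^ l : Ideal R4) : Set R4)

/-- An ideal of `ℂ[z₀,…,z₃]` is saturated if it coincides with its
saturation. -/
def IsSaturated (I : Ideal R4) : Prop := satIdeal I = I

/-- The homogeneous ideal `(F₀,…,F₃)` defining the singular scheme. -/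
def singIdeal (F : Fin 4 → R4) : Ideal R4 := Ideal.span (Set.range F)

/-- The graded module of syzygies of `(F₀,…,F₃)`; it is the module of twisted
global sections of `𝓕 ⊕ 𝓞` (suitably twisted), where `𝓕` is the tangent
sheaf of the foliation defined by `∑ Fᵢ dzᵢ`. -/
def Syz (F : Fin 4 → R4) : Submodule R4 (Fin 4 → R4) :=
  LinearMap.ker (Fintype.linearCombination R4 F)

/-- The irrelevant ideal `(z₀,…,z₃)`. -/
def irrelevant : Ideal R4 := Ideal.span (Set.range (X : Fin 4 → R4))

/-- An ideal is homogeneous if it contains all homogeneous components of its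
elements. -/
def IsHomogIdeal (I : Ideal R4) : Prop :=
  ∀ f ∈ I, ∀ n : ℕ, homogeneousComponent n f ∈ I

/-- The tangent sheaf of the foliation given by `F` is locally free:
the syzygy module is free at every relevant point of `Proj ℂ[z₀,…,z₃] = ℙ³`. -/
def TangentLocallyFree (F : Fin 4 → R4) : Prop :=
  ∀ p : Ideal R4, ∀ hp : p.IsPrime, IsHomogIdeal p → ¬ irrelevant ≤ p →
    Module.Free (Localization (p.primeCompl (hp := hp)))
      (LocalizedModule (p.primeCompl (hp := hp)) ↥(Syz F))

/-- The tangent sheaf of the foliation given by `F` splits as a direct sum of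
two line bundles: equivalently (by Horrocks' criterion), the graded module of
syzygies of `(F₀,…,F₃)` is free. -/
def TangentSplits (F : Fin 4 → R4) : Prop := Module.Free R4 ↥(Syz F)

/-! The syzygy module of `F` is free on `v`, `w` and the Euler syzygy `X`. Since
`deg v = 1 - a ≥ 2` and `deg w = 1 - b ≥ 2`, the degree-one part of `p v + q w + r X` is
`r(0) X`, so every linear syzygy is a multiple of the Euler one.

Freeness also makes `(F)` saturated: if `Xᵢ g = ∑ⱼ hᵢⱼ Fⱼ` for all `i`, the basis coordinates of
the syzygies `Xₖ hᵢ - Xᵢ hₖ` form a Koszul cocycle, which is a coboundary because the Koszul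
complex of `X₀, …, X₃` is exact at `Λ²` (the divergence is a contracting homotopy, by Euler's
identity). Correcting the `hᵢ` by it gives `Xₖ hᵢ = Xᵢ hₖ`, so `hᵢ = Xᵢ t` and `g = ∑ tⱼ Fⱼ`.
Hence `F'ᵢ ∈ (F)`; comparing degrees, `F' = c F` for a constant matrix `c`, and the Euler
relation of `F'` makes `(∑ᵢ cᵢⱼ Xᵢ)ⱼ` a linear syzygy of `F`, which forces `c = λ · 1`. -/

open Finset

namespace MvPolynomial

variable {σ R : Type*}

section CommSemiring

variable [CommSemiring R]

section
attribute [local instance] gradedAlgebra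

theorem homogeneousComponent_mul_of_isHomogeneous {m : ℕ} {g : MvPolynomial σ R}
    (hg : g.IsHomogeneous m) (p : MvPolynomial σ R) (n : ℕ) :
    homogeneousComponent n (p * g) =
      if m ≤ n then homogeneousComponent (n - m) p * g else 0 := by
  simp only [← decomposition.decompose'_apply]
  exact DirectSum.coe_decompose_mul_of_right_mem (homogeneousSubmodule σ R) n hg

end

theorem homogeneousComponent_X_mul (i : σ) (p : MvPolynomial σ R) (n : ℕ) :
    homogeneousComponent (n + 1) (X i * p) = X i * homogeneousComponent n p := by
  rw [mul_comm, homogeneousComponent_mul_of_isHomogeneous (isHomogeneous_X R i),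
    if_pos (by omega), Nat.add_sub_cancel, mul_comm]

theorem exists_eq_sum_C_mul_of_mem_span {κ : Type*} [Fintype κ] {n : ℕ}
    {f : MvPolynomial σ R} {F : κ → MvPolynomial σ R} (hf : f.IsHomogeneous n)
    (hF : ∀ j, (F j).IsHomogeneous n) (hmem : f ∈ Ideal.span (Set.range F)) :
    ∃ c : κ → R, f = ∑ j, C (c j) * F j := by
  obtain ⟨t, rfl⟩ := Ideal.mem_span_range_iff_exists_fun.mp hmem
  refine ⟨fun j => coeff 0 (t j), ?_⟩
  rw [← homogeneousComponent_eq_self hf, map_sum]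
  simp [homogeneousComponent_mul_of_isHomogeneous (hF _), homogeneousComponent_zero]

theorem exists_eq_C_mul_X_of_isHomogeneous_one {m n : ℕ} (hm : 2 ≤ m) (hn : 2 ≤ n)
    {v w ℓ : σ → MvPolynomial σ R} (hv : ∀ i, (v i).IsHomogeneous m)
    (hw : ∀ i, (w i).IsHomogeneous n) (hℓ : ∀ i, (ℓ i).IsHomogeneous 1)
    (h : ∃ p q r : MvPolynomial σ R, ℓ = fun i => p * v i + q * w i + r * X i) :
    ∃ lam : R, ∀ i, ℓ i = C lam * X i := by
  obtain ⟨p, q, r, rfl⟩ := h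
  refine ⟨coeff 0 r, fun i => ?_⟩
  rw [← homogeneousComponent_eq_self (hℓ i)]
  simp [homogeneousComponent_mul_of_isHomogeneous (hv i),
    homogeneousComponent_mul_of_isHomogeneous (hw i),
    homogeneousComponent_mul_of_isHomogeneous (isHomogeneous_X R i),
    show ¬m ≤ 1 by omega, show ¬n ≤ 1 by omega, homogeneousComponent_zero]

variable [Fintype σ]

theorem sum_pderiv_X_mul (j : σ) (a : σ → MvPolynomial σ R) :
    ∑ k, pderiv k (X j * a k) = a j + X j * ∑ k, pderiv k (a k) := by
  classical
  simp [pderiv_X, sum_add_distrib, mul_sum, Pi.single_apply, add_comm]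

theorem IsHomogeneous.sum_pderiv_X_mul_self {m : ℕ} {p : MvPolynomial σ R}
    (hp : p.IsHomogeneous m) :
    ∑ k, pderiv k (X k * p) = ((Fintype.card σ + m : ℕ) : MvPolynomial σ R) * p := by
  simp [sum_add_distrib, hp.sum_X_mul_pderiv, add_mul, add_comm]

end CommSemiring

section CommRing

variable [CommRing R]

theorem X_dvd_of_X_dvd_X_mul [IsDomain R] {i k : σ} (hik : i ≠ k) {p : MvPolynomial σ R}
    (h : X i ∣ X k * p) : X i ∣ p :=
  (X_prime.dvd_or_dvd h).resolve_left fun h' => hik (X_dvd_X.mp h')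

theorem exists_eq_C_mul_of_forall_linear_syzygy [Fintype σ] {F F' : σ → MvPolynomial σ R}
    {c : σ → σ → R} (hF' : ∀ i, F' i = ∑ j, C (c i j) * F j) (heuler : ∑ i, X i * F' i = 0)
    (hlin : ∀ ℓ : σ → MvPolynomial σ R, (∀ i, (ℓ i).IsHomogeneous 1) →
      ∑ i, ℓ i * F i = 0 → ∃ lam : R, ∀ i, ℓ i = C lam * X i) :
    ∃ lam : R, ∀ i, F' i = C lam * F i := by
  classical
  obtain ⟨lam, hlam⟩ := hlin (fun j => ∑ i, C (c i j) * X i)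
    (fun j => IsHomogeneous.sum _ _ _ fun i _ => isHomogeneous_C_mul_X _ _) <| by
      simp only [sum_mul, ← heuler, hF', mul_sum]
      rw [sum_comm]
      exact sum_congr rfl fun i _ => sum_congr rfl fun j _ => by ring
  have hc : ∀ i j, c i j = if i = j then lam else 0 := fun i j => sub_eq_zero.mp <|
    Fintype.linearIndependent_iff.mp (linearIndependent_X (R := R) (σ := σ))
      (fun i => c i j - if i = j then lam else 0)
      (by simp [sub_smul, sum_sub_distrib, smul_eq_C_mul, hlam j]) i
  exact ⟨lam, fun i => by simp [hF' i, hc, apply_ite C, ite_mul]⟩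

/-- The antisymmetric matrix `c`, read as an element of `Λ²`, is killed by `∑ₖ Xₖ eₖ ∧ -`;
the coboundaries are the `(i, j) ↦ Xⱼ eᵢ - Xᵢ eⱼ`. -/
def IsKoszulCocycle (c : σ → σ → MvPolynomial σ R) : Prop :=
  (∀ i j, c i j = -c j i) ∧ ∀ i j k, X j * c i k - X i * c j k - X k * c i j = 0

theorem IsKoszulCocycle.homogeneousComponent {c : σ → σ → MvPolynomial σ R}
    (hc : IsKoszulCocycle c) (m : ℕ) :
    IsKoszulCocycle fun i j => homogeneousComponent m (c i j) := by
  refine ⟨fun i j => by simp only [hc.1 i j, map_neg], fun i j k => ?_⟩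
  simpa only [map_sub, homogeneousComponent_X_mul, map_zero] using
    congrArg (MvPolynomial.homogeneousComponent (m + 1)) (hc.2 i j k)

variable {K : Type*} [Field K] [CharZero K] [Fintype σ]

theorem IsKoszulCocycle.exists_eq_of_isHomogeneous (hσ : 3 ≤ Fintype.card σ)
    {c : σ → σ → MvPolynomial σ K} (hc : IsKoszulCocycle c) {m : ℕ}
    (hhom : ∀ i j, (c i j).IsHomogeneous m) :
    ∃ e : σ → MvPolynomial σ K, ∀ i j, c i j = X j * e i - X i * e j := by
  set S : σ → MvPolynomial σ K := fun i => ∑ k, pderiv k (c i k)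
  set N : K := (Fintype.card σ + m : ℕ) - 2
  -- the divergence `∑ₖ ∂ₖ` of the cocycle identity, evaluated with Euler's identity
  have key : ∀ i j, X j * S i - X i * S j = C N * c i j := by
    intro i j
    have h0 : ∑ k, pderiv k (X j * c i k - X i * c j k - X k * c i j) = 0 := by
      simp [hc.2 i j]
    simp only [map_sub, sum_sub_distrib, sum_pderiv_X_mul, (hhom i j).sum_pderiv_X_mul_self]
      at h0
    simp only [N, map_sub, map_natCast, map_ofNat]
    linear_combination h0 + hc.1 i j
  have hN : N ≠ 0 := sub_ne_zero.mpr (by exact_mod_cast (by omega : Fintype.card σ + m ≠ 2))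
  refine ⟨fun i => C N⁻¹ * S i, fun i j => ?_⟩
  calc c i j = C N⁻¹ * (C N * c i j) := by
        rw [← mul_assoc, ← map_mul, inv_mul_cancel₀ hN, map_one, one_mul]
    _ = _ := by rw [← key]; ring

theorem IsKoszulCocycle.exists_eq (hσ : 3 ≤ Fintype.card σ) {c : σ → σ → MvPolynomial σ K}
    (hc : IsKoszulCocycle c) :
    ∃ e : σ → MvPolynomial σ K, ∀ i j, c i j = X j * e i - X i * e j := by
  choose e he using fun m =>
    (hc.homogeneousComponent m).exists_eq_of_isHomogeneous hσ fun i j =>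
      homogeneousComponent_isHomogeneous m (c i j)
  set N := univ.sup fun ij : σ × σ => (c ij.1 ij.2).totalDegree
  refine ⟨fun i => ∑ m ∈ range (N + 1), e m i, fun i j => ?_⟩
  have hdeg : (c i j).totalDegree ≤ N :=
    le_sup (f := fun ij : σ × σ => (c ij.1 ij.2).totalDegree) (mem_univ (i, j))
  have hsum : ∑ m ∈ range (N + 1), MvPolynomial.homogeneousComponent m (c i j) = c i j := by
    refine (sum_subset (range_subset_range.mpr (by omega)) fun m _ hm => ?_).symm.trans
      (sum_homogeneousComponent _)
    exact homogeneousComponent_eq_zero _ _ (by simpa using hm)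
  rw [← hsum, mul_sum, mul_sum, ← sum_sub_distrib]
  exact sum_congr rfl fun m _ => he m i j

variable {M ι : Type*} [AddCommGroup M] [Module (MvPolynomial σ K) M] [Fintype ι]

theorem exists_X_smul_comm_of_sub_mem_span (hσ : 3 ≤ Fintype.card σ)
    {B : ι → M} (hB : LinearIndependent (MvPolynomial σ K) B) {u : σ → M}
    (hu : ∀ i k, X (R := K) k • u i - X (R := K) i • u k ∈
      Submodule.span (MvPolynomial σ K) (Set.range B)) :
    ∃ u' : σ → M, (∀ i, u i - u' i ∈ Submodule.span (MvPolynomial σ K) (Set.range B)) ∧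
      ∀ i k, X (R := K) k • u' i = X (R := K) i • u' k := by
  choose c hc using fun i k => (Submodule.mem_span_range_iff_exists_fun _).mp (hu i k)
  have hli := Fintype.linearIndependent_iff.mp hB
  have hcoc : ∀ l, IsKoszulCocycle fun i k => c i k l := by
    refine fun l => ⟨fun i k => eq_neg_of_add_eq_zero_left ?_, fun i j k => ?_⟩
    · refine hli (fun l => c i k l + c k i l) ?_ l
      simp only [add_smul, sum_add_distrib, hc]
      abel
    · refine hli (fun l => X j * c i k l - X i * c j k l - X k * c i j l) ?_ l
      simp only [sub_smul, mul_smul, sum_sub_distrib, ← smul_sum, hc]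
      module
  choose e he using fun l => (hcoc l).exists_eq hσ
  refine ⟨fun i => u i - ∑ l, e l i • B l, fun i => ?_, fun i k => ?_⟩
  · simpa using Submodule.sum_mem _ fun l _ =>
      Submodule.smul_mem _ _ (Submodule.subset_span (Set.mem_range_self l))
  · have hcob : X (R := K) k • u i - X (R := K) i • u k =
        X (R := K) k • ∑ l, e l i • B l - X (R := K) i • ∑ l, e l k • B l := by
      simp only [← hc, he, sub_smul, mul_smul, sum_sub_distrib, smul_sum]
    linear_combination (norm := module) hcob

theorem mem_span_of_forall_X_mul_mem {κ : Type*} [Fintype κ] (hσ : 3 ≤ Fintype.card σ)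
    {F : κ → MvPolynomial σ K} {B : ι → κ → MvPolynomial σ K}
    (hB : LinearIndependent (MvPolynomial σ K) B)
    (hker : Submodule.span (MvPolynomial σ K) (Set.range B) =
      LinearMap.ker (Fintype.linearCombination (MvPolynomial σ K) F))
    {g : MvPolynomial σ K} (hg : ∀ i, X i * g ∈ Ideal.span (Set.range F)) :
    g ∈ Ideal.span (Set.range F) := by
  set L := Fintype.linearCombination (MvPolynomial σ K) F
  have hL : ∀ s, L s = ∑ j, s j * F j := fun s => by simp [L, Fintype.linearCombination_apply]
  choose u hu using fun i => Ideal.mem_span_range_iff_exists_fun.mp (hg i)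
  obtain ⟨u', hu'B, hu'⟩ := exists_X_smul_comm_of_sub_mem_span hσ hB (u := u) fun i k => by
    rw [hker, LinearMap.mem_ker, map_sub, map_smul, map_smul, hL, hL, hu, hu, smul_eq_mul,
      smul_eq_mul]
    ring
  have hLu' : ∀ i, L (u' i) = X i * g := fun i => by
    have hi := hu'B i
    rw [hker, LinearMap.mem_ker, map_sub, sub_eq_zero] at hi
    rw [← hi, hL, hu]
  obtain ⟨i, k, hik⟩ := Fintype.exists_pair_of_one_lt_card (by omega : 1 < Fintype.card σ)
  choose t ht using fun j => X_dvd_of_X_dvd_X_mul hik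
    (Dvd.intro _ (congrFun (hu' i k) j).symm)
  have hXg : X i * g = X i * ∑ j, t j * F j := by
    rw [← hLu', hL, mul_sum]
    exact sum_congr rfl fun j _ => by rw [ht j, mul_assoc]
  exact Ideal.mem_span_range_iff_exists_fun.mpr ⟨t, (mul_left_cancel₀ (X_ne_zero i) hXg).symm⟩

end CommRing

end MvPolynomial

theorem le_satIdeal (I : Ideal R4) : I ≤ satIdeal I := fun _ hx =>
  Submodule.mem_iSup_of_mem 0 (Submodule.mem_colon.mpr fun p _ => I.mul_mem_right p hx)

theorem satIdeal_le_of_forall_X_mul_mem {I : Ideal R4} (h : ∀ g, (∀ i, X i * g ∈ I) → g ∈ I) :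
    satIdeal I ≤ I := by
  refine iSup_le fun l => ?_
  induction l with
  | zero => exact fun x hx => by simpa using Submodule.mem_colon.mp hx 1 (by simp)
  | succ l ih =>
    refine fun x hx => ih (Submodule.mem_colon.mpr fun p hp => h _ fun i => ?_)
    have hpX : p * X i ∈ Ideal.span (Set.range (X : Fin 4 → R4)) ^ (l + 1) := by
      rw [pow_succ]
      exact Ideal.mul_mem_mul hp (Ideal.subset_span ⟨i, rfl⟩)
    convert Submodule.mem_colon.mp hx _ hpX using 1
    simp only [smul_eq_mul]
    ring

theorem satIdeal_singIdeal_le {F v w : Fin 4 → R4}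
    (hgen : ∀ s : Fin 4 → R4, (∑ i, s i * F i = 0) ↔
      ∃ p q r : R4, s = fun i => p * v i + q * w i + r * X i)
    (hindep : ∀ p q r : R4,
      (fun i => p * v i + q * w i + r * X i) = (0 : Fin 4 → R4) →
      p = 0 ∧ q = 0 ∧ r = 0) :
    satIdeal (singIdeal F) ≤ singIdeal F := by
  refine satIdeal_le_of_forall_X_mul_mem fun g hg =>
    mem_span_of_forall_X_mul_mem (B := ![v, w, X]) (by simp) ?_ ?_ hg
  · refine Fintype.linearIndependent_iff.mpr fun c hc => ?_
    obtain ⟨h0, h1, h2⟩ := hindep (c 0) (c 1) (c 2) <| funext fun i => by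
      simpa [Fin.sum_univ_three] using congrFun hc i
    exact Fin.forall_fin_succ.mpr ⟨h0, Fin.forall_fin_succ.mpr ⟨h1, Fin.forall_fin_one.mpr h2⟩⟩
  · ext s
    rw [Submodule.mem_span_range_iff_exists_fun, LinearMap.mem_ker,
      Fintype.linearCombination_apply]
    simp only [smul_eq_mul]
    rw [hgen]
    constructor
    · rintro ⟨c, rfl⟩
      exact ⟨c 0, c 1, c 2, by ext i; simp [Fin.sum_univ_three]⟩
    · rintro ⟨p, q, r, rfl⟩
      exact ⟨![p, q, r], by ext i; simp [Fin.sum_univ_three]⟩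

theorem split_negative_type_determined_by_singular_scheme_general
    (d : ℕ) (a b : ℤ) (ha : a ≤ b) (hb : b ≤ -1)
    (F : Fin 4 → R4) (hfol : IsFoliation d F)
    (v w : Fin 4 → R4)
    (hv : ∀ i, (v i).IsHomogeneous (1 - a).toNat)
    (hw : ∀ i, (w i).IsHomogeneous (1 - b).toNat)
    (hgen : ∀ s : Fin 4 → R4, (∑ i, s i * F i = 0) ↔
      ∃ p q r : R4, s = fun i => p * v i + q * w i + r * X i)
    (hindep : ∀ p q r : R4,
      (fun i => p * v i + q * w i + r * X i) = (0 : Fin 4 → R4) →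
      p = 0 ∧ q = 0 ∧ r = 0) :
    (∀ ℓ : Fin 4 → R4, (∀ i, (ℓ i).IsHomogeneous 1) → (∑ i, ℓ i * F i = 0) →
      ∃ lam : ℂ, ∀ i, ℓ i = C lam * X i) ∧
    (∀ F' : Fin 4 → R4, (∀ i, (F' i).IsHomogeneous (d + 1)) → EulerRel F' →
      IntegrableForm F' → CodimGE2 F' →
      satIdeal (singIdeal F') = satIdeal (singIdeal F) →
      ∃ lam : ℂ, lam ≠ 0 ∧ ∀ i, F' i = C lam * F i) := by
  have hlin : ∀ ℓ : Fin 4 → R4, (∀ i, (ℓ i).IsHomogeneous 1) → (∑ i, ℓ i * F i = 0) →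
      ∃ lam : ℂ, ∀ i, ℓ i = C lam * X i := fun ℓ hℓ hsyz =>
    exists_eq_C_mul_X_of_isHomogeneous_one (by omega) (by omega) hv hw hℓ ((hgen ℓ).mp hsyz)
  refine ⟨hlin, fun F' hF' hF'euler _ hF'codim hsat => ?_⟩
  have hmem : ∀ i, F' i ∈ singIdeal F := fun i =>
    satIdeal_singIdeal_le hgen hindep (hsat ▸ le_satIdeal _ (Ideal.subset_span ⟨i, rfl⟩))
  choose c hc using fun i => exists_eq_sum_C_mul_of_mem_span (hF' i) hfol.1 (hmem i)
  obtain ⟨lam, hlam⟩ := exists_eq_C_mul_of_forall_linear_syzygy hc hF'euler hlin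
  refine ⟨lam, fun h0 => hF'codim ⟨X 0, X_prime, fun i => ?_⟩, hlam⟩
  simp [hlam i, h0]

/-- Let `ω = ∑ Fᵢ dzᵢ` define a degree `d` reduced foliation
on `ℙ³` whose tangent sheaf splits as `𝓞(a) ⊕ 𝓞(b)` with `a ≤ b ≤ -1` and
`a + b = 2 - d` — equivalently, the syzygy module of `(F₀,…,F₃)` is freely
generated by the Euler syzygy `(z₀,…,z₃)` together with two homogeneous
syzygies of (component-)degrees `1 - a` and `1 - b`.  Then every linear syzygy
`∑ ℓᵢ Fᵢ = 0` is a scalar multiple of the Euler relation, and consequently any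
foliation `ω\' = ∑ Fᵢ\' dzᵢ` with the same singular scheme satisfies
`ω\' = λ ω` for some `λ ∈ ℂ*`. -/
theorem split_negative_type_determined_by_singular_scheme
    (d : ℕ) (a b : ℤ) (ha : a ≤ b) (hb : b ≤ -1) (hab : a + b = 2 - (d : ℤ))
    (F : Fin 4 → R4) (hfol : IsFoliation d F)
    (v w : Fin 4 → R4)
    (hv : ∀ i, (v i).IsHomogeneous (1 - a).toNat)
    (hw : ∀ i, (w i).IsHomogeneous (1 - b).toNat)
    (hgen : ∀ s : Fin 4 → R4, (∑ i, s i * F i = 0) ↔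
      ∃ p q r : R4, s = fun i => p * v i + q * w i + r * X i)
    (hindep : ∀ p q r : R4,
      (fun i => p * v i + q * w i + r * X i) = (0 : Fin 4 → R4) →
      p = 0 ∧ q = 0 ∧ r = 0) :
    (∀ ℓ : Fin 4 → R4, (∀ i, (ℓ i).IsHomogeneous 1) → (∑ i, ℓ i * F i = 0) →
      ∃ lam : ℂ, ∀ i, ℓ i = C lam * X i) ∧
    (∀ F' : Fin 4 → R4, (∀ i, (F' i).IsHomogeneous (d + 1)) → EulerRel F' →
      IntegrableForm F' → CodimGE2 F' →
      satIdeal (singIdeal F') = satIdeal (singIdeal F) →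
      ∃ lam : ℂ, lam ≠ 0 ∧ ∀ i, F' i = C lam * F i) :=
  split_negative_type_determined_by_singular_scheme_general d a b ha hb F hfol v w hv hw hgen hindep
end
end

section
/- Let F_φ be a degree d reduced codimension one foliation on P³ given by ω = Σ Fᵢ dzᵢ with singular set of codimension two. If there exist complex numbers a₀, a₁, a₂, a₃, not all zero, with a₀F₀ + a₁F₁ + a₂F₂ + a₃F₃ = 0, then after a linear change of coordinates the foliation is defined by a form G₁ dz₁' + G₂ dz₂' + G₃ dz₃' where G₁, G₂, G₃ ∈ C[z₁', z₂', z₃']; that is, F_φ is the linear pull-back of a degree d foliation on a plane P² ⊂ P³. -/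
open MvPolynomial

/-! Codimension one holomorphic foliations on `ℙ³`, in algebraic form.
A degree `d` codimension one foliation is given by a projective `1`-form
`ω = ∑ Fᵢ dzᵢ` where the `Fᵢ ∈ ℂ[z₀,…,z₃]` are homogeneous of degree `d+1`,
satisfy the Euler relation `∑ zᵢFᵢ = 0`, the integrability condition
`ω ∧ dω = 0`, and the common zero scheme (the singular scheme `Z`) has
codimension at least two.  The tangent sheaf `𝓕` of the foliation is the
kernel of `Tℙ³ → 𝓘_Z(d+2)`; combining this with the Euler sequence,
`𝓕 ⊕ 𝓞` is the sheaf associated with the graded module of syzygies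
`Syz F = {(ℓ₀,…,ℓ₃) : ∑ ℓᵢFᵢ = 0}` (twisted by `1`), so that `𝓕` is
locally free (resp. splits as a sum of line bundles) iff `Syz F` is locally
free at all relevant homogeneous primes (resp. is a free module). -/

noncomputable section

local notation "R4" => MvPolynomial (Fin 4) ℂ

/-- The `1`-form obtained from `ω = ∑ Fᵢ dzᵢ` by the linear change of
coordinates `z = A z\'`: its `j`-th coefficient is
`∑ᵢ Fᵢ(A z\') Aᵢⱼ`. -/
def changeCoords (A : Matrix (Fin 4) (Fin 4) ℂ) (F : Fin 4 → R4) :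
    Fin 4 → R4 :=
  fun j => ∑ i, (aeval (fun k => ∑ l, C (A k l) * X l) (F i)) * C (A i j)

/-! Move the constant syzygy `a` into the first column of an invertible matrix `A`. The form
`G` obtained by the substitution `z = A z'` has `G₀ = 0` and is still homogeneous, integrable,
and without common prime factor. The `dz₀ ∧ dzⱼ ∧ dzₖ` coefficient of `G ∧ dG` then reads
`Gₖ ∂₀Gⱼ = Gⱼ ∂₀Gₖ`, so by unique factorisation `Gⱼ ∣ ∂₀Gⱼ`; as `∂₀Gⱼ` is homogeneous of
smaller degree, it vanishes. -/

theorem Matrix.exists_isUnit_col_eq {K ι : Type*} [Field K] [Fintype ι] [DecidableEq ι]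
    {v : ι → K} (hv : v ≠ 0) (j : ι) : ∃ A : Matrix ι ι K, IsUnit A ∧ ∀ k, A k j = v k := by
  obtain ⟨i, hi⟩ := Function.ne_iff.mp hv
  refine ⟨((1 : Matrix ι ι K).updateCol i v).submatrix id (Equiv.swap j i), ?_, fun k => ?_⟩
  · have hdet := Matrix.det_updateCol_sum (1 : Matrix ι ι K) i v
    simp only [Matrix.one_apply, smul_eq_mul, mul_ite, mul_one, mul_zero, Finset.sum_ite_eq,
      Finset.mem_univ, if_true, Matrix.det_one] at hdet
    rw [Matrix.isUnit_iff_isUnit_det, Matrix.det_permute', hdet]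
    exact ((Equiv.Perm.sign _).isUnit.map (Int.castRingHom K)).mul hi.isUnit
  · simp

theorem dvd_of_forall_mul_eq_mul_of_not_exists_prime {M ι : Type*} [CommMonoidWithZero M]
    [UniqueFactorizationMonoid M] {f g : ι → M} (hf : ¬∃ p, Prime p ∧ ∀ i, p ∣ f i) {j : ι}
    (hj : f j ≠ 0) (hfg : ∀ k, f k * g j = f j * g k) : f j ∣ g j := by
  let := UniqueFactorizationMonoid.toGCDMonoid M
  obtain ⟨a, b, ha, hb, hab⟩ := extract_gcd (f j) (g j)
  set c := gcd (f j) (g j)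
  have hc : c ≠ 0 := fun h => hj (by rw [ha, h, zero_mul])
  have ha_dvd : ∀ k, a ∣ f k := by
    intro k
    have hk := hfg k
    rw [ha, hb] at hk
    refine (gcd_isUnit_iff_isRelPrime.mp hab).dvd_of_dvd_mul_right ⟨g k, ?_⟩
    exact mul_left_cancel₀ hc (by rw [mul_left_comm, hk, mul_assoc])
  have ha_unit : IsUnit a := by
    by_contra hna
    obtain ⟨q, hq, hqa⟩ :=
      WfDvdMonoid.exists_irreducible_factor hna (right_ne_zero_of_mul (ha ▸ hj))
    exact hf ⟨q, hq.prime, fun k => hqa.trans (ha_dvd k)⟩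
  rw [ha, ha_unit.mul_right_dvd, hb]
  exact dvd_mul_right _ _

namespace MvPolynomial

theorem IsHomogeneous.eq_zero_of_dvd {R σ : Type*} [CommRing R] [IsDomain R]
    {f g : MvPolynomial σ R} {n : ℕ} (hf : f.IsHomogeneous (n + 1)) (hg : g.IsHomogeneous n)
    (hfg : f ∣ g) : g = 0 := by
  by_contra hg0
  obtain ⟨w, rfl⟩ := hfg
  have hdeg := totalDegree_mul_of_isDomain (left_ne_zero_of_mul hg0) (right_ne_zero_of_mul hg0)
  rw [hg.totalDegree hg0, hf.totalDegree (left_ne_zero_of_mul hg0)] at hdeg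
  omega

variable {R σ τ : Type*} [CommSemiring R] [Fintype σ]

theorem pderiv_aeval (g : σ → MvPolynomial τ R) (m : τ) (f : MvPolynomial σ R) :
    pderiv m (aeval g f) = ∑ k, aeval g (pderiv k f) * pderiv m (g k) := by
  induction f using MvPolynomial.induction_on with
  | C c => simp
  | add p q hp hq => simp only [map_add, hp, hq, add_mul, Finset.sum_add_distrib]
  | mul_X p i hp =>
    simp only [map_mul, aeval_X, pderiv_mul, hp, map_add, add_mul, Finset.sum_add_distrib,
      Finset.sum_mul]
    congr 1
    · exact Finset.sum_congr rfl fun k _ => mul_right_comm _ _ _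
    · rw [Finset.sum_eq_single i fun k _ hk => by simp [pderiv_X_of_ne hk.symm]] <;> simp

/-- The substitution `f(z) ↦ f(A z)`. -/
def linearSubst (A : Matrix σ σ R) : MvPolynomial σ R →ₐ[R] MvPolynomial σ R :=
  aeval fun k => ∑ l, C (A k l) * X l

theorem linearSubst_comp (A B : Matrix σ σ R) :
    (linearSubst A).comp (linearSubst B) = linearSubst (B * A) := by
  refine algHom_ext fun k => ?_
  simp only [linearSubst, AlgHom.comp_apply, aeval_X, map_sum, map_mul, aeval_C, algebraMap_eq,
    Finset.mul_sum, Matrix.mul_apply, Finset.sum_mul]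
  rw [Finset.sum_comm]
  simp only [← mul_assoc, ← C_mul]

theorem linearSubst_one [DecidableEq σ] :
    linearSubst (1 : Matrix σ σ R) = AlgHom.id R (MvPolynomial σ R) :=
  algHom_ext fun k => by simp [linearSubst, Matrix.one_apply]

def linearSubstEquiv [DecidableEq σ] (A : (Matrix σ σ R)ˣ) :
    MvPolynomial σ R ≃ₐ[R] MvPolynomial σ R :=
  AlgEquiv.ofAlgHom (linearSubst A) (linearSubst ↑A⁻¹)
    (by rw [linearSubst_comp, A.inv_mul, linearSubst_one])
    (by rw [linearSubst_comp, A.mul_inv, linearSubst_one])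

theorem IsHomogeneous.linearSubst {f : MvPolynomial σ R} {n : ℕ} (hf : f.IsHomogeneous n)
    (A : Matrix σ σ R) : (linearSubst A f).IsHomogeneous n := by
  have := hf.aeval (fun k => ∑ l, C (A k l) * X l) (n := 1) fun k =>
    IsHomogeneous.sum _ _ _ fun l _ => (isHomogeneous_X R l).C_mul _
  rwa [one_mul] at this

theorem pderiv_linearSubst (A : Matrix σ σ R) (m : σ) (f : MvPolynomial σ R) :
    pderiv m (linearSubst A f) = ∑ k, linearSubst A (pderiv k f) * C (A k m) := by
  classical
  rw [linearSubst, pderiv_aeval]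
  simp [pderiv_X, Pi.single_apply]

end MvPolynomial

/-- The coefficient of `dzᵢ ∧ dzⱼ ∧ dzₖ` in `ω ∧ dω` for `ω = ∑ sᵢ dzᵢ`, where `t q r` stands
for `∂ s_q / ∂ z_r`. -/
def integrabilityCoeff {ι R : Type*} [CommRing R] (s : ι → R) (t : ι → ι → R) (i j k : ι) : R :=
  s i * (t k j - t j k) + s j * (t i k - t k i) + s k * (t j i - t i j)

theorem map_integrabilityCoeff {ι R S F : Type*} [CommRing R] [CommRing S] [FunLike F R S]
    [RingHomClass F R S] (φ : F) (s : ι → R) (t : ι → ι → R) (i j k : ι) :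
    φ (integrabilityCoeff s t i j k) =
      integrabilityCoeff (fun p => φ (s p)) (fun p r => φ (t p r)) i j k := by
  simp only [integrabilityCoeff, map_add, map_mul, map_sub]

theorem integrabilityCoeff_vecMul {R : Type*} [CommRing R] (s : Fin 4 → R)
    (t : Fin 4 → Fin 4 → R) (M : Matrix (Fin 4) (Fin 4) R) (i j k : Fin 4) :
    integrabilityCoeff (Matrix.vecMul s M) (fun q m => ∑ p, ∑ r, t p r * M r m * M p q) i j k =
      ∑ p, ∑ q, ∑ r, integrabilityCoeff s t p q r * (M p i * M q j * M r k) := by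
  simp only [integrabilityCoeff, Matrix.vecMul, dotProduct, Fin.sum_univ_four]
  ring

theorem integrableForm_iff (F : Fin 4 → R4) :
    IntegrableForm F ↔ ∀ i j k, integrabilityCoeff F (fun q r => pderiv r (F q)) i j k = 0 :=
  Iff.rfl

section changeCoords

variable (A : Matrix (Fin 4) (Fin 4) ℂ)

theorem changeCoords_eq_vecMul (F : Fin 4 → R4) :
    changeCoords A F = Matrix.vecMul (fun i => linearSubst A (F i)) (A.map C) :=
  rfl

theorem pderiv_changeCoords (F : Fin 4 → R4) (m q : Fin 4) :
    pderiv m (changeCoords A F q) =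
      ∑ p, ∑ r, linearSubst A (pderiv r (F p)) * C (A r m) * C (A p q) := by
  change pderiv m (∑ p, linearSubst A (F p) * C (A p q)) = _
  simp only [map_sum, pderiv_mul, pderiv_C, mul_zero, add_zero, pderiv_linearSubst,
    Finset.sum_mul]

theorem changeCoords_eq_zero {F : Fin 4 → R4} {a : Fin 4 → ℂ} {j : Fin 4}
    (hcol : ∀ k, A k j = a k) (hsum : ∑ i, C (a i) * F i = 0) : changeCoords A F j = 0 :=
  calc changeCoords A F j = ∑ i, linearSubst A (C (a i) * F i) :=
        Finset.sum_congr rfl fun i _ => by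
          rw [map_mul, hcol, mul_comm, linearSubst, aeval_C, algebraMap_eq]
    _ = 0 := by rw [← map_sum, hsum, map_zero]

theorem isHomogeneous_changeCoords {F : Fin 4 → R4} {n : ℕ} (hF : ∀ i, (F i).IsHomogeneous n)
    (j : Fin 4) :
    (changeCoords A F j).IsHomogeneous n :=
  IsHomogeneous.sum _ _ _ fun i _ => by
    rw [mul_comm]
    exact ((hF i).linearSubst A).C_mul _

theorem IntegrableForm.changeCoords {F : Fin 4 → R4} (hF : IntegrableForm F) :
    IntegrableForm (_root_.changeCoords A F) := by
  have hD : (fun q m => pderiv m (_root_.changeCoords A F q)) =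
      fun q m => ∑ p, ∑ r, linearSubst A (pderiv r (F p)) * A.map C r m * A.map C p q := by
    funext q m
    exact pderiv_changeCoords A F m q
  rw [integrableForm_iff] at hF ⊢
  intro i j k
  rw [hD, changeCoords_eq_vecMul, integrabilityCoeff_vecMul]
  refine Finset.sum_eq_zero fun p _ => Finset.sum_eq_zero fun q _ =>
    Finset.sum_eq_zero fun r _ => ?_
  rw [← map_integrabilityCoeff, hF, map_zero, zero_mul]

end changeCoords

theorem CodimGE2.changeCoords {F : Fin 4 → R4} (hF : CodimGE2 F) {A : Matrix (Fin 4) (Fin 4) ℂ}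
    (hA : IsUnit A) :
    CodimGE2 (_root_.changeCoords A F) := by
  obtain ⟨u, rfl⟩ := hA
  rintro ⟨p, hp, hpG⟩
  have hrec : Matrix.vecMul (_root_.changeCoords u F) ((↑u⁻¹ : Matrix (Fin 4) (Fin 4) ℂ).map C) =
      fun m => linearSubst (↑u) (F m) := by
    rw [changeCoords_eq_vecMul, Matrix.vecMul_vecMul, ← Matrix.map_mul, u.mul_inv,
      Matrix.map_one _ (map_zero C) (map_one C), Matrix.vecMul_one]
  let e := linearSubstEquiv u
  refine hF ⟨e.symm p, (MulEquiv.prime_iff e.symm.toMulEquiv).mpr hp, fun m => ?_⟩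
  have hpm : p ∣ linearSubst (↑u) (F m) := by
    rw [← congrFun hrec m, Matrix.vecMul, dotProduct]
    exact Finset.dvd_sum fun i _ => (hpG i).mul_right _
  rw [← e.symm_apply_apply (F m)]
  exact map_dvd e.symm hpm

theorem IntegrableForm.mul_pderiv_eq_mul_pderiv {G : Fin 4 → R4} (hG : IntegrableForm G)
    {i : Fin 4} (hi : G i = 0) (j k : Fin 4) :
    G k * pderiv i (G j) = G j * pderiv i (G k) := by
  have h := hG i j k
  simp only [hi, map_zero, zero_mul, zero_add, zero_sub] at h
  linear_combination h

theorem IntegrableForm.pderiv_eq_zero_of_eq_zero {d : ℕ} {G : Fin 4 → R4}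
    (hint : IntegrableForm G) (hhom : ∀ i, (G i).IsHomogeneous (d + 1)) (hcod : CodimGE2 G)
    {i : Fin 4} (hi : G i = 0) (j : Fin 4) : pderiv i (G j) = 0 := by
  by_cases hj : G j = 0
  · rw [hj, map_zero]
  · refine (hhom j).eq_zero_of_dvd (by simpa using (hhom j).pderiv (i := i)) ?_
    exact dvd_of_forall_mul_eq_mul_of_not_exists_prime (f := G) (g := fun k => pderiv i (G k))
      hcod hj (hint.mul_pderiv_eq_mul_pderiv hi j)

/-- Let `ω = ∑ Fᵢ dzᵢ` define a degree `d` reduced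
codimension one foliation on `ℙ³` with singular set of codimension two.  If
there is a nonzero constant syzygy `∑ aᵢ Fᵢ = 0`, then after an invertible
linear change of coordinates the foliation is defined by a form
`G₁ dz₁\' + G₂ dz₂\' + G₃ dz₃\'` whose coefficients do not involve `z₀\'`;
that is, the foliation is the linear pull-back of a degree `d` foliation on a
plane `ℙ² ⊆ ℙ³`. -/
theorem linear_pullback_of_constant_syzygy (d : ℕ) (F : Fin 4 → R4)
    (hfol : IsFoliation d F)
    (hsyz : ∃ aa : Fin 4 → ℂ, aa ≠ 0 ∧ ∑ i, C (aa i) * F i = 0) :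
    ∃ A : Matrix (Fin 4) (Fin 4) ℂ, IsUnit A ∧
      changeCoords A F 0 = 0 ∧
      ∀ j, pderiv (0 : Fin 4) (changeCoords A F j) = 0 := by
  obtain ⟨hhom, -, hint, hcod⟩ := hfol
  obtain ⟨a, ha, hsum⟩ := hsyz
  obtain ⟨A, hA, hcol⟩ := Matrix.exists_isUnit_col_eq ha 0
  have h0 : changeCoords A F 0 = 0 := changeCoords_eq_zero A hcol hsum
  exact ⟨A, hA, h0, (hint.changeCoords A).pderiv_eq_zero_of_eq_zero
    (isHomogeneous_changeCoords A hhom) (hcod.changeCoords hA) h0⟩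

end
end

section
/- Let ω = ℓ₀ℓ₁ℓ₂ℓ₃ Σ_{i=0}^{3} λᵢ (dℓᵢ/ℓᵢ) be a logarithmic form on P³, where ℓ₀,…,ℓ₃ are linear forms in general position and λᵢ ∈ C* with Σ λᵢ = 0. Then ω is integrable (ω ∧ dω = 0), and its singular scheme contains the six lines {ℓᵢ = ℓⱼ = 0}, i < j (the edges of the coordinate tetrahedron of the ℓᵢ). Moreover, distinct choices of (λ₀,…,λ₃) up to scalar, with the same ℓᵢ, give distinct foliations with the same singular scheme. -/
open MvPolynomial

/-! Codimension one holomorphic foliations on `ℙ³`, in algebraic form.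
A degree `d` codimension one foliation is given by a projective `1`-form
`ω = ∑ Fᵢ dzᵢ` where the `Fᵢ ∈ ℂ[z₀,…,z₃]` are homogeneous of degree `d+1`,
satisfy the Euler relation `∑ zᵢFᵢ = 0`, the integrability condition
`ω ∧ dω = 0`, and the common zero scheme (the singular scheme `Z`) has
codimension at least two.  The tangent sheaf `𝓕` of the foliation is the
kernel of `Tℙ³ → 𝓘_Z(d+2)`; combining this with the Euler sequence,
`𝓕 ⊕ 𝓞` is the sheaf associated with the graded module of syzygies
`Syz F = {(ℓ₀,…,ℓ₃) : ∑ ℓᵢFᵢ = 0}` (twisted by `1`), so that `𝓕` is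
locally free (resp. splits as a sum of line bundles) iff `Syz F` is locally
free at all relevant homogeneous primes (resp. is a free module). -/

noncomputable section

local notation "R4" => MvPolynomial (Fin 4) ℂ

/-- The coefficients of the logarithmic `1`-form
`ω = ℓ₀ℓ₁ℓ₂ℓ₃ ∑ᵢ λᵢ dℓᵢ/ℓᵢ = ∑ᵢ λᵢ (∏_{j ≠ i} ℓⱼ) dℓᵢ`, where the linear
forms are `ℓᵢ = ∑ₗ Aᵢₗ zₗ`; the `k`-th coefficient (of `dz_k`). -/
def logForm (A : Matrix (Fin 4) (Fin 4) ℂ) (lam : Fin 4 → ℂ) : Fin 4 → R4 :=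
  fun k => ∑ i, C (lam i) * C (A i k) *
    ∏ j ∈ Finset.univ.erase i, (∑ l, C (A j l) * X l)


/-! On the complement of the planes, `ω = F η` with `F = ℓ₀ℓ₁ℓ₂ℓ₃` and `η = ∑ λᵢ dℓᵢ/ℓᵢ` closed,
so `ω ∧ dω = F² η ∧ dF/F ∧ η = 0`. Polynomially: the coefficient of `ω ∧ dω` expands as
`∑ λ_a λ_b D(a,m,b) P_a Q_{bm}`, where `P_a = ∏_{n ≠ a} ℓₙ`, `Q_{bm} = ∏_{n ≠ b, m} ℓₙ` and
`D(a,m,b)` is a `3 × 3` minor of `A`. For `a, b, m` distinct `P_a Q_{bm} = P_b Q_{am}`, while `D` is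
alternating, so the terms cancel in pairs.

The coefficient vector of `ω` is `Aᵀ (λᵢ Pᵢ)ᵢ`. When `A` is invertible and the `λᵢ` are units its
entries generate the same ideal as the `Pᵢ`, whatever the `λᵢ`; and since the `Pᵢ` are nonzero,
`λ` can be read off from `ω`. Finally each `Pᵢ` contains `ℓ_a` or `ℓ_b` for any `a ≠ b`, so `ω`
vanishes on the line `ℓ_a = ℓ_b = 0`. -/

open scoped Matrix

theorem Derivation.leibniz_prod {R A M ι : Type*} [CommSemiring R] [CommSemiring A]
    [Algebra R A] [AddCommMonoid M] [Module A M] [Module R M] (D : Derivation R A M)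
    [DecidableEq ι] (s : Finset ι) (f : ι → A) :
    D (∏ i ∈ s, f i) = ∑ i ∈ s, (∏ j ∈ s.erase i, f j) • D (f i) := by
  induction s using Finset.induction with
  | empty => simp
  | insert a s ha ih =>
    rw [Finset.prod_insert ha, D.leibniz, ih, Finset.sum_insert ha, Finset.erase_insert ha,
      Finset.smul_sum, add_comm]
    congr 1
    refine Finset.sum_congr rfl fun i hi => ?_
    rw [Finset.erase_insert_of_ne (ne_of_mem_of_not_mem hi ha).symm,
      Finset.prod_insert fun h => ha (Finset.mem_of_mem_erase h), smul_smul]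

theorem Finset.sum_sum_eq_zero_of_antisymm {ι M : Type*} [Fintype ι] [AddCommGroup M]
    (g : ι → ι → M) (hanti : ∀ a b, g b a = -g a b) (hdiag : ∀ a, g a a = 0) :
    ∑ a, ∑ b, g a b = 0 := by
  rw [← Fintype.sum_prod_type']
  refine Finset.sum_ninvolution Prod.swap
    (fun p => by rw [Prod.fst_swap, Prod.snd_swap, hanti, neg_add_cancel])
    (fun p hp h => hp ?_) (fun _ => Finset.mem_univ _) Prod.swap_swap
  rw [← Prod.fst_swap (p := p), h, hdiag]

theorem Finset.prod_erase_mul_prod_erase_erase_comm {ι M : Type*} [DecidableEq ι] [CommMonoid M]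
    {s : Finset ι} (f : ι → M) {a b m : ι} (hm : m ∈ s) (ha : m ≠ a) (hb : m ≠ b) :
    (∏ n ∈ s.erase a, f n) * ∏ n ∈ (s.erase b).erase m, f n =
      (∏ n ∈ s.erase b, f n) * ∏ n ∈ (s.erase a).erase m, f n := by
  rw [← Finset.mul_prod_erase (s.erase a) f (Finset.mem_erase.2 ⟨ha, hm⟩),
    ← Finset.mul_prod_erase (s.erase b) f (Finset.mem_erase.2 ⟨hb, hm⟩)]
  exact mul_right_comm _ _ _

theorem Matrix.det_submatrix_swap {R m n : Type*} [CommRing R] (A : Matrix m n R) (a b c : m)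
    (col : Fin 3 → n) : (A.submatrix ![c, b, a] col).det = -(A.submatrix ![a, b, c] col).det := by
  simp only [det_fin_three, submatrix_apply, cons_val_zero, cons_val_one, cons_val]
  ring

theorem Matrix.row_ne_zero_of_isUnit {R n : Type*} [CommRing R] [Nontrivial R] [Fintype n]
    [DecidableEq n] {A : Matrix n n R} (hA : IsUnit A) (i : n) : A i ≠ 0 := fun h =>
  ((isUnit_iff_isUnit_det A).1 hA).ne_zero (det_eq_zero_of_row_eq_zero i fun j => congrFun h j)

theorem Ideal.span_range_mulVec_le {S m n : Type*} [CommSemiring S] [Fintype n]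
    (M : Matrix m n S) (v : n → S) :
    Ideal.span (Set.range (M *ᵥ v)) ≤ Ideal.span (Set.range v) :=
  span_le.2 <| Set.range_subset_iff.2 fun _ =>
    sum_mem _ fun j _ => mul_mem_left _ _ (subset_span ⟨j, rfl⟩)

theorem Ideal.span_range_mulVec_of_isUnit {S m : Type*} [CommSemiring S] [Fintype m]
    [DecidableEq m] {M : Matrix m m S} (hM : IsUnit M) (v : m → S) :
    Ideal.span (Set.range (M *ᵥ v)) = Ideal.span (Set.range v) := by
  refine le_antisymm (span_range_mulVec_le M v) ?_
  obtain ⟨N, hN⟩ := hM.exists_left_inv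
  calc Ideal.span (Set.range v) = Ideal.span (Set.range (N *ᵥ M *ᵥ v)) := by
        rw [Matrix.mulVec_mulVec, hN, Matrix.one_mulVec]
    _ ≤ _ := span_range_mulVec_le N _

namespace MvPolynomial

open Finset

variable {R σ ι : Type*} [CommRing R]

/-- The coefficient of `dzᵢ ∧ dzⱼ ∧ dz_k` in `ω ∧ dω` for `ω = ∑ Fᵢ dzᵢ`. -/
def integrabilityCoeff (F : σ → MvPolynomial σ R) (i j k : σ) : MvPolynomial σ R :=
  F i * (pderiv j (F k) - pderiv k (F j)) +
  F j * (pderiv k (F i) - pderiv i (F k)) +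
  F k * (pderiv i (F j) - pderiv j (F i))

variable [Fintype σ]

def linForm (A : Matrix ι σ R) (j : ι) : MvPolynomial σ R := ∑ l, C (A j l) * X l

theorem pderiv_linForm (A : Matrix ι σ R) (j : ι) (k : σ) :
    pderiv k (linForm A j) = C (A j k) := by
  classical
  simp [linForm, Pi.single_apply]

theorem linForm_ne_zero {A : Matrix ι σ R} {j : ι} (h : A j ≠ 0) : linForm A j ≠ 0 := by
  contrapose! h
  funext l
  simpa [h] using (pderiv_linForm A j l).symm

theorem pderiv_prod_linForm [DecidableEq ι] (A : Matrix ι σ R) (k : σ) (s : Finset ι) :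
    pderiv k (∏ j ∈ s, linForm A j) = ∑ m ∈ s, C (A m k) * ∏ j ∈ s.erase m, linForm A j := by
  simp only [Derivation.leibniz_prod, pderiv_linForm, smul_eq_mul, mul_comm]

variable [Fintype ι] [DecidableEq ι]

/-- `logForm` for any number of linear forms `linForm A j` in any number of variables. -/
def logCoeff (A : Matrix ι σ R) (lam : ι → R) (k : σ) : MvPolynomial σ R :=
  ∑ i, C (lam i) * C (A i k) * ∏ j ∈ univ.erase i, linForm A j

section

variable (A : Matrix ι σ R) (lam : ι → R)

theorem mul_pderiv_logCoeff (α β γ : σ) :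
    logCoeff A lam α * pderiv β (logCoeff A lam γ) =
      ∑ a, ∑ b, ∑ m ∈ univ.erase b, C (lam a * lam b * (A a α * A m β * A b γ)) *
        ((∏ n ∈ univ.erase a, linForm A n) * ∏ n ∈ (univ.erase b).erase m, linForm A n) := by
  rw [logCoeff, logCoeff, map_sum, sum_mul_sum]
  refine sum_congr rfl fun a _ => sum_congr rfl fun b _ => ?_
  rw [mul_assoc (C (lam b)), pderiv_C_mul, pderiv_C_mul, pderiv_prod_linForm, mul_sum, mul_sum,
    mul_sum]
  refine sum_congr rfl fun m _ => ?_
  simp only [map_mul]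
  ring

theorem integrabilityCoeff_logCoeff (i j k : σ) :
    integrabilityCoeff (logCoeff A lam) i j k =
      ∑ a, ∑ b, ∑ m ∈ univ.erase b,
        C (lam a * lam b * (A.submatrix ![a, m, b] ![i, j, k]).det) *
          ((∏ n ∈ univ.erase a, linForm A n) * ∏ n ∈ (univ.erase b).erase m, linForm A n) := by
  simp only [integrabilityCoeff, mul_sub, mul_pderiv_logCoeff, ← sum_sub_distrib,
    ← sum_add_distrib]
  refine sum_congr rfl fun a _ => sum_congr rfl fun b _ => sum_congr rfl fun m _ => ?_
  rw [Matrix.det_fin_three]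
  simp only [Matrix.submatrix_apply, Matrix.cons_val_zero, Matrix.cons_val_one, Matrix.cons_val,
    map_mul, map_sub, map_add]
  ring

theorem integrabilityCoeff_logCoeff_eq_zero (i j k : σ) :
    integrabilityCoeff (logCoeff A lam) i j k = 0 := by
  have hdet₀₁ (a m : ι) : (A.submatrix ![m, m, a] ![i, j, k]).det = 0 :=
    Matrix.det_zero_of_row_eq (i := 0) (j := 1) (by decide) rfl
  have hdet₁₂ (a m : ι) : (A.submatrix ![a, m, m] ![i, j, k]).det = 0 :=
    Matrix.det_zero_of_row_eq (i := 1) (j := 2) (by decide) rfl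
  rw [integrabilityCoeff_logCoeff]
  refine sum_sum_eq_zero_of_antisymm _ (fun a b => ?_) fun a => sum_eq_zero fun m _ => ?_
  · rw [sum_erase univ (by rw [hdet₁₂, mul_zero, map_zero, zero_mul]),
      sum_erase univ (by rw [hdet₁₂, mul_zero, map_zero, zero_mul]), ← sum_neg_distrib]
    refine sum_congr rfl fun m _ => ?_
    by_cases hm : m = a ∨ m = b
    · rcases hm with rfl | rfl <;>
        simp only [hdet₀₁, hdet₁₂, mul_zero, map_zero, zero_mul, neg_zero]
    · push Not at hm
      rw [Matrix.det_submatrix_swap, prod_erase_mul_prod_erase_erase_comm _ (mem_univ m) hm.1 hm.2,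
        mul_neg, map_neg, neg_mul, mul_comm (lam b)]
  · rw [Matrix.det_zero_of_row_eq (i := 0) (j := 2) (by decide) rfl, mul_zero, map_zero, zero_mul]

theorem eval_logCoeff_eq_zero {i j : ι} (hij : i ≠ j) {x : σ → R}
    (hi : eval x (linForm A i) = 0) (hj : eval x (linForm A j) = 0) (k : σ) :
    eval x (logCoeff A lam k) = 0 := by
  rw [logCoeff, map_sum]
  refine sum_eq_zero fun a _ => ?_
  obtain ⟨b, hba, hb⟩ : ∃ b ≠ a, eval x (linForm A b) = 0 :=
    if hia : i = a then ⟨j, hia ▸ hij.symm, hj⟩ else ⟨i, hia, hi⟩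
  rw [map_mul, map_prod, prod_eq_zero (mem_erase.2 ⟨hba, mem_univ b⟩) hb, mul_zero]

theorem logCoeff_eq_mulVec :
    logCoeff A lam = (A.map C)ᵀ *ᵥ fun a => C (lam a) * ∏ n ∈ univ.erase a, linForm A n := by
  funext k
  simp only [logCoeff, Matrix.mulVec, dotProduct, Matrix.transpose_apply, Matrix.map_apply]
  exact sum_congr rfl fun a _ => by ring

theorem logCoeff_smul (c : R) (k : σ) : logCoeff A (c • lam) k = C c * logCoeff A lam k := by
  simp only [logCoeff, mul_sum, Pi.smul_apply, smul_eq_mul, map_mul]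
  exact sum_congr rfl fun a _ => by ring

end

theorem isUnit_transpose_map_C {A : Matrix ι ι R} (hA : IsUnit A) :
    IsUnit (A.map (C : R → MvPolynomial ι R))ᵀ :=
  (Matrix.isUnit_transpose _).2 (hA.map (C : R →+* MvPolynomial ι R).mapMatrix)

theorem span_range_logCoeff {A : Matrix ι ι R} (hA : IsUnit A) {lam : ι → R}
    (hlam : ∀ i, IsUnit (lam i)) :
    Ideal.span (Set.range (logCoeff A lam)) =
      Ideal.span (Set.range fun a => ∏ n ∈ univ.erase a, linForm A n) := by
  rw [logCoeff_eq_mulVec, ← _root_.funext (Matrix.mulVec_diagonal (fun a => C (lam a)) _),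
    Ideal.span_range_mulVec_of_isUnit (isUnit_transpose_map_C hA),
    Ideal.span_range_mulVec_of_isUnit
      (Matrix.isUnit_diagonal.2 (Pi.isUnit_iff.2 fun a => (hlam a).map C))]

theorem logCoeff_injective [IsDomain R] {A : Matrix ι ι R} (hA : IsUnit A) :
    Function.Injective (logCoeff A) := by
  intro lam mu h
  rw [logCoeff_eq_mulVec, logCoeff_eq_mulVec] at h
  have hprod (a : ι) : ∏ n ∈ univ.erase a, linForm A n ≠ 0 :=
    prod_ne_zero_iff.2 fun j _ => linForm_ne_zero (Matrix.row_ne_zero_of_isUnit hA j)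
  funext a
  exact C_injective ι R (mul_right_cancel₀ (hprod a)
    (congrFun (Matrix.mulVec_injective_of_isUnit (isUnit_transpose_map_C hA) h) a))

end MvPolynomial

theorem logForm_eq_logCoeff (A : Matrix (Fin 4) (Fin 4) ℂ) (lam : Fin 4 → ℂ) :
    logForm A lam = logCoeff A lam :=
  rfl

theorem logarithmic_foliation_L1111_general (A : Matrix (Fin 4) (Fin 4) ℂ)
    (hA : IsUnit A) (lam mu : Fin 4 → ℂ)
    (hlam0 : ∀ i, lam i ≠ 0)
    (hmu0 : ∀ i, mu i ≠ 0) :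
    IntegrableForm (logForm A lam) ∧
    (∀ i j : Fin 4, i ≠ j → ∀ x : Fin 4 → ℂ,
      eval x (∑ l, C (A i l) * X l) = 0 → eval x (∑ l, C (A j l) * X l) = 0 →
      ∀ k, eval x (logForm A lam k) = 0) ∧
    satIdeal (singIdeal (logForm A lam)) = satIdeal (singIdeal (logForm A mu)) ∧
    ((¬ ∃ c : ℂ, ∀ i, mu i = c * lam i) →
      ¬ ∃ c : ℂ, ∀ k, logForm A mu k = C c * logForm A lam k) := by
  refine ⟨integrabilityCoeff_logCoeff_eq_zero A lam,
    fun i j hij x hi hj => eval_logCoeff_eq_zero A lam hij hi hj, ?_, ?_⟩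
  · rw [singIdeal, singIdeal, logForm_eq_logCoeff, logForm_eq_logCoeff,
      span_range_logCoeff hA fun i => (hlam0 i).isUnit,
      span_range_logCoeff hA fun i => (hmu0 i).isUnit]
  · rintro hne ⟨c, hc⟩
    have hmu : logCoeff A mu = logCoeff A (c • lam) := funext fun k => by
      rw [logCoeff_smul]
      exact hc k
    exact hne ⟨c, congrFun (logCoeff_injective hA hmu)⟩

/-- Let `ω = ℓ₀ℓ₁ℓ₂ℓ₃ ∑ λᵢ dℓᵢ/ℓᵢ` be a logarithmic form on
`ℙ³` with `ℓ₀,…,ℓ₃` linear forms in general position (for four planes in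
`ℙ³`: linearly independent, i.e. the matrix `A` of coefficients is invertible)
and `λᵢ ∈ ℂ*` with `∑ λᵢ = 0`.  Then `ω` is integrable, its singular scheme
contains the six lines `{ℓᵢ = ℓⱼ = 0}`, and distinct choices of `(λᵢ)` up to
scalar (same `ℓᵢ`) give distinct foliations with the same singular scheme. -/
theorem logarithmic_foliation_L1111 (A : Matrix (Fin 4) (Fin 4) ℂ)
    (hA : IsUnit A) (lam mu : Fin 4 → ℂ)
    (hlam0 : ∀ i, lam i ≠ 0) (hlam : ∑ i, lam i = 0)
    (hmu0 : ∀ i, mu i ≠ 0) (hmu : ∑ i, mu i = 0) :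
    IntegrableForm (logForm A lam) ∧
    (∀ i j : Fin 4, i ≠ j → ∀ x : Fin 4 → ℂ,
      eval x (∑ l, C (A i l) * X l) = 0 → eval x (∑ l, C (A j l) * X l) = 0 →
      ∀ k, eval x (logForm A lam k) = 0) ∧
    satIdeal (singIdeal (logForm A lam)) = satIdeal (singIdeal (logForm A mu)) ∧
    ((¬ ∃ c : ℂ, ∀ i, mu i = c * lam i) →
      ¬ ∃ c : ℂ, ∀ k, logForm A mu k = C c * logForm A lam k) :=
  logarithmic_foliation_L1111_general A hA lam mu hlam0 hmu0

end
end

section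
/- For d > 2, consider the affine vector fields S = (1+d+d²) z₁ ∂/∂z₁ + (1+d) z₂ ∂/∂z₂ + z₃ ∂/∂z₃ and X = (1+d+d²) z₂^d ∂/∂z₁ + (1+d) z₃^d ∂/∂z₂ + ∂/∂z₃ on C³. Then S and X generate a two-dimensional Lie algebra, and the 1-form ω = i_S i_X (dz₁ ∧ dz₂ ∧ dz₃) equals (1+d)(z₂ − z₃^{d+1}) dz₁ − (1+d+d²)(z₁ − z₂^d z₃) dz₂ − (1+2d+2d²+d³)(z₂^{d+1} − z₁z₃^d) dz₃, and ω is integrable: ω ∧ dω = 0. -/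
open MvPolynomial

noncomputable section

local notation "R3" => MvPolynomial (Fin 3) ℂ

/-- The linear vector field
`S = (1+d+d²) z₁ ∂/∂z₁ + (1+d) z₂ ∂/∂z₂ + z₃ ∂/∂z₃` on `ℂ³`
(the variables `z₁, z₂, z₃` are indexed by `0, 1, 2`). -/
def Svf (d : ℕ) : Fin 3 → R3 :=
  ![C ((1 : ℂ) + d + d ^ 2) * X 0, C ((1 : ℂ) + d) * X 1, X 2]

/-- The quasi-homogeneous vector field
`X = (1+d+d²) z₂^d ∂/∂z₁ + (1+d) z₃^d ∂/∂z₂ + ∂/∂z₃` on `ℂ³`. -/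
def Xvf (d : ℕ) : Fin 3 → R3 :=
  ![C ((1 : ℂ) + d + d ^ 2) * X 1 ^ d, C ((1 : ℂ) + d) * X 2 ^ d, 1]

/-- The Lie bracket `[V, W]` of two polynomial vector fields on `ℂ³`. -/
def lieBkt (V W : Fin 3 → R3) : Fin 3 → R3 :=
  fun i => ∑ j, (V j * pderiv j (W i) - W j * pderiv j (V i))

/-- The contraction `ω = i_S i_X (dz₁ ∧ dz₂ ∧ dz₃)`, whose coefficient of
`dz_k` is the `k`-th component of the cross product `S × X`. -/
def omegaSX (d : ℕ) : Fin 3 → R3 :=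
  ![Svf d 1 * Xvf d 2 - Svf d 2 * Xvf d 1,
    Svf d 2 * Xvf d 0 - Svf d 0 * Xvf d 2,
    Svf d 0 * Xvf d 1 - Svf d 1 * Xvf d 0]

/-- The integrability condition `ω ∧ dω = 0` for a `1`-form
`ω = A dz₁ + B dz₂ + C dz₃` on `ℂ³`. -/
def Integrable3 (W : Fin 3 → R3) : Prop :=
  W 0 * (pderiv 1 (W 2) - pderiv 2 (W 1)) +
  W 1 * (pderiv 2 (W 0) - pderiv 0 (W 2)) +
  W 2 * (pderiv 0 (W 1) - pderiv 1 (W 0)) = 0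

set_option maxHeartbeats 2000000 in
/-- For `d > 2`, the vector fields `S` and `X` generate a
two-dimensional (affine) Lie algebra, i.e. `[S,X]` lies in their span; the
`1`-form `ω = i_S i_X (dz₁ ∧ dz₂ ∧ dz₃)` is given by the explicit formula
`ω = (1+d)(z₂ - z₃^{d+1}) dz₁ - (1+d+d²)(z₁ - z₂^d z₃) dz₂
  - (1+2d+2d²+d³)(z₂^{d+1} - z₁ z₃^d) dz₃`,
and `ω` is integrable: `ω ∧ dω = 0`. -/
theorem exceptional_component_affine_structure (d : ℕ) (hd : 2 < d) :
    (omegaSX d 0 = C ((1 : ℂ) + d) * (X 1 - X 2 ^ (d + 1))) ∧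
    (omegaSX d 1 = - (C ((1 : ℂ) + d + d ^ 2) * (X 0 - X 1 ^ d * X 2))) ∧
    (omegaSX d 2 =
      - (C ((1 : ℂ) + 2 * d + 2 * d ^ 2 + d ^ 3) * (X 1 ^ (d + 1) - X 0 * X 2 ^ d))) ∧
    Integrable3 (omegaSX d) ∧
    (∃ al be : ℂ, ∀ i, lieBkt (Svf d) (Xvf d) i = C al * Svf d i + C be * Xvf d i) := by
  obtain ⟨e, rfl⟩ : ∃ e, d = e + 3 := ⟨d - 3, by omega⟩
  have hpd : ∀ (i j : Fin 3) (n : ℕ), pderiv i ((X j : R3) ^ n)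
      = (n : R3) * X j ^ (n - 1) * (if i = j then 1 else 0) := by
    intro i j n
    rw [pderiv_pow, pderiv_X]
    by_cases h : i = j <;> simp [h, Pi.single_apply]
  have h0 : omegaSX (e + 3) 0 = C ((1 : ℂ) + (e+3)) * (X 1 - X 2 ^ ((e+3) + 1)) := by
    simp only [omegaSX, Svf, Xvf, Matrix.cons_val_zero, Matrix.cons_val_one, Matrix.head_cons,
      Matrix.cons_val_two, Matrix.tail_cons]
    push_cast [← C_eq_coe_nat]
    simp only [C_add, C_mul, C_pow, C_1, map_ofNat, map_zero, map_neg]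
    ring
  have h1 : omegaSX (e + 3) 1
      = - (C ((1 : ℂ) + (e+3) + (e+3) ^ 2) * (X 0 - X 1 ^ (e+3) * X 2)) := by
    simp only [omegaSX, Svf, Xvf, Matrix.cons_val_zero, Matrix.cons_val_one, Matrix.head_cons,
      Matrix.cons_val_two, Matrix.tail_cons]
    push_cast [← C_eq_coe_nat]
    simp only [C_add, C_mul, C_pow, C_1, map_ofNat, map_zero, map_neg]
    ring
  have h2 : omegaSX (e + 3) 2
      = - (C ((1 : ℂ) + 2 * (e+3) + 2 * (e+3) ^ 2 + (e+3) ^ 3)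
          * (X 1 ^ ((e+3) + 1) - X 0 * X 2 ^ (e+3))) := by
    simp only [omegaSX, Svf, Xvf, Matrix.cons_val_zero, Matrix.cons_val_one, Matrix.head_cons,
      Matrix.cons_val_two, Matrix.tail_cons]
    push_cast [← C_eq_coe_nat]
    simp only [C_add, C_mul, C_pow, C_1, map_ofNat, map_zero, map_neg]
    ring
  refine ⟨by exact_mod_cast h0, by exact_mod_cast h1, by exact_mod_cast h2, ?_, 0, -1, ?_⟩
  · unfold Integrable3
    rw [h0, h1, h2]
    simp only [map_sub, pderiv_mul, map_add, map_one, map_neg, pderiv_C, pderiv_one, hpd, pderiv_X,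
      Pi.single_apply, Matrix.cons_val_zero, Matrix.cons_val_one, Matrix.head_cons,
      Matrix.cons_val_two, Matrix.tail_cons]
    push_cast [← C_eq_coe_nat]
    simp only [C_add, C_mul, C_pow, C_1, map_ofNat, map_zero, map_neg]
    ring
  · intro i
    have hb0 : lieBkt (Svf (e+3)) (Xvf (e+3)) 0
        = C (0:ℂ) * Svf (e+3) 0 + C (-1:ℂ) * Xvf (e+3) 0 := by
      simp only [lieBkt, Svf, Xvf, Fin.sum_univ_three, Matrix.cons_val_zero, Matrix.cons_val_one,
        Matrix.head_cons, Matrix.cons_val_two, Matrix.tail_cons]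
      simp only [map_sub, pderiv_mul, map_add, map_one, pderiv_C, pderiv_one, hpd, pderiv_X,
        Pi.single_apply]
      push_cast [← C_eq_coe_nat]
      simp only [C_add, C_mul, C_pow, C_1, map_ofNat, map_zero, map_neg]
      ring
    have hb1 : lieBkt (Svf (e+3)) (Xvf (e+3)) 1
        = C (0:ℂ) * Svf (e+3) 1 + C (-1:ℂ) * Xvf (e+3) 1 := by
      simp only [lieBkt, Svf, Xvf, Fin.sum_univ_three, Matrix.cons_val_zero, Matrix.cons_val_one,
        Matrix.head_cons, Matrix.cons_val_two, Matrix.tail_cons]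
      simp only [map_sub, pderiv_mul, map_add, map_one, pderiv_C, pderiv_one, hpd, pderiv_X,
        Pi.single_apply]
      push_cast [← C_eq_coe_nat]
      simp only [C_add, C_mul, C_pow, C_1, map_ofNat, map_zero, map_neg]
      ring
    have hb2 : lieBkt (Svf (e+3)) (Xvf (e+3)) 2
        = C (0:ℂ) * Svf (e+3) 2 + C (-1:ℂ) * Xvf (e+3) 2 := by
      simp only [lieBkt, Svf, Xvf, Fin.sum_univ_three, Matrix.cons_val_zero, Matrix.cons_val_one,
        Matrix.head_cons, Matrix.cons_val_two, Matrix.tail_cons]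
      simp only [map_sub, pderiv_mul, map_add, map_one, pderiv_C, pderiv_one, hpd, pderiv_X,
        Pi.single_apply]
      push_cast [← C_eq_coe_nat]
      simp only [C_add, C_mul, C_pow, C_1, map_ofNat, map_zero, map_neg]
      ring
    fin_cases i
    · exact hb0
    · exact hb1
    · exact hb2
end
end

section
/- Let Z ⊂ P³ be a closed subscheme which is a cone over a point p (i.e. invariant under the projection from p), and let H ⊂ P³ be a plane not containing p. If F_φ and G_ψ are degree d ≠ 1 foliations on P³, both linear pull-backs from p of foliations F̄, Ḡ on H, and both have singular scheme Z, then F̄ and Ḡ have the same singular scheme H ∩ Z in H; hence (by the Campillo–Olivares theorem that a degree d ≠ 1 reduced foliation on P² is determined by its singular scheme) F_φ = G_ψ up to scalar. -/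
open MvPolynomial

/-! Codimension one holomorphic foliations on `ℙ³`, in algebraic form.
A degree `d` codimension one foliation is given by a projective `1`-form
`ω = ∑ Fᵢ dzᵢ` where the `Fᵢ ∈ ℂ[z₀,…,z₃]` are homogeneous of degree `d+1`,
satisfy the Euler relation `∑ zᵢFᵢ = 0`, the integrability condition
`ω ∧ dω = 0`, and the common zero scheme (the singular scheme `Z`) has
codimension at least two.  The tangent sheaf `𝓕` of the foliation is the
kernel of `Tℙ³ → 𝓘_Z(d+2)`; combining this with the Euler sequence,
`𝓕 ⊕ 𝓞` is the sheaf associated with the graded module of syzygies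
`Syz F = {(ℓ₀,…,ℓ₃) : ∑ ℓᵢFᵢ = 0}` (twisted by `1`), so that `𝓕` is
locally free (resp. splits as a sum of line bundles) iff `Syz F` is locally
free at all relevant homogeneous primes (resp. is a free module). -/

noncomputable section

local notation "R4" => MvPolynomial (Fin 4) ℂ

/-- The saturation of an ideal with respect to the irrelevant ideal
`(z₁,z₂,z₃)` of the plane `H = {z₀ = 0} ⊆ ℙ³` (for subschemes of `H`, whose
defining polynomials do not involve `z₀`). -/
def satIdealPlane (I : Ideal R4) : Ideal R4 :=
  ⨆ l : ℕ, I.colon (((Ideal.span {X 1, X 2, X 3} : Ideal R4) ^ l : Ideal R4) : Set R4)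

/-- `ω = ∑ Fᵢ dzᵢ` is the linear pull-back, from the point `p = [1:0:0:0]`, of
a foliation on the plane `H = {z₀ = 0}`: the `dz₀` coefficient vanishes and
the remaining coefficients do not involve `z₀`. -/
def IsPullbackFromP (F : Fin 4 → R4) : Prop :=
  F 0 = 0 ∧ ∀ i, pderiv (0 : Fin 4) (F i) = 0

/-! The plane singular scheme `H ∩ Z` is cut out by saturating with respect to
`(z₁,z₂,z₃)`, and this ideal is contained in the irrelevant ideal `(z₀,…,z₃)`.
Hence saturating first with respect to `(z₀,…,z₃)` changes nothing: in a Noetherian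
ring that saturation is a single colon `I : Kⁿ`, and `(I : Kⁿ) : Jˡ ⊆ I : Jˡ⁺ⁿ`
whenever `J ≤ K`. So the saturated ideal of `Z` already determines the singular
schemes of the plane foliations, and Campillo–Olivares finishes the proof. -/

namespace Ideal

variable {R : Type*} [CommRing R]

def saturation (J I : Ideal R) : Ideal R :=
  ⨆ l : ℕ, I.colon ((J ^ l : Ideal R) : Set R)

theorem monotone_colon_pow (J I : Ideal R) :
    Monotone fun l : ℕ => I.colon ((J ^ l : Ideal R) : Set R) :=
  fun _ _ hlm => Submodule.colon_mono le_rfl (Ideal.pow_le_pow_right hlm)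

theorem saturation_mono (J : Ideal R) {I I' : Ideal R} (h : I ≤ I') :
    saturation J I ≤ saturation J I' :=
  iSup_mono fun _ => Submodule.colon_mono h le_rfl

theorem colon_pow_le_saturation (J I : Ideal R) (l : ℕ) :
    I.colon ((J ^ l : Ideal R) : Set R) ≤ saturation J I :=
  le_iSup (fun l : ℕ => I.colon ((J ^ l : Ideal R) : Set R)) l

theorem le_saturation (J I : Ideal R) : I ≤ saturation J I :=
  Ideal.le_colon.trans (colon_pow_le_saturation J I 0)

theorem exists_saturation_eq_colon_pow [IsNoetherianRing R] (J I : Ideal R) :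
    ∃ n : ℕ, saturation J I = I.colon ((J ^ n : Ideal R) : Set R) := by
  obtain ⟨n, hn⟩ := monotone_stabilizes_iff_noetherian.mpr (inferInstance : IsNoetherian R R)
    ⟨fun l => I.colon ((J ^ l : Ideal R) : Set R), monotone_colon_pow J I⟩
  refine ⟨n, le_antisymm (iSup_le fun l => ?_) (colon_pow_le_saturation J I n)⟩
  rcases le_total l n with hln | hnl
  · exact monotone_colon_pow J I hln
  · exact (hn l hnl).ge

theorem colon_colon_le_colon_mul (I A B : Ideal R) :
    (I.colon (A : Set R)).colon (B : Set R) ≤ I.colon ((B * A : Ideal R) : Set R) := by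
  intro f hf
  suffices B * A ≤ I.colon (Ideal.span {f}) from
    Submodule.mem_colon.mpr fun s hs => by
      simpa [mul_comm] using Ideal.mem_colon_span_singleton.mp (this hs)
  refine Ideal.mul_le.mpr fun b hb a ha => Ideal.mem_colon_span_singleton.mpr ?_
  have hfba : f * b * a ∈ I := Submodule.mem_colon.mp (Submodule.mem_colon.mp hf b hb) a ha
  simpa [mul_comm, mul_left_comm, mul_assoc] using hfba

theorem saturation_colon_pow_le {J K : Ideal R} (hJK : J ≤ K) (I : Ideal R) (n : ℕ) :
    saturation J (I.colon ((K ^ n : Ideal R) : Set R)) ≤ saturation J I := by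
  refine iSup_le fun l => (colon_colon_le_colon_mul I _ _).trans ?_
  have hpow : J ^ (l + n) ≤ J ^ l * K ^ n := by
    rw [pow_add]
    exact Ideal.mul_mono_right (Ideal.pow_right_mono hJK n)
  exact (Submodule.colon_mono le_rfl hpow).trans (colon_pow_le_saturation J I (l + n))

theorem saturation_saturation_of_le [IsNoetherianRing R] {J K : Ideal R} (hJK : J ≤ K)
    (I : Ideal R) : saturation J (saturation K I) = saturation J I := by
  obtain ⟨n, hn⟩ := exists_saturation_eq_colon_pow K I
  refine le_antisymm ?_ (saturation_mono J (le_saturation K I))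
  rw [hn]
  exact saturation_colon_pow_le hJK I n

end Ideal

theorem satIdealPlane_satIdeal (I : Ideal R4) :
    satIdealPlane (satIdeal I) = satIdealPlane I := by
  refine Ideal.saturation_saturation_of_le (Ideal.span_mono ?_) I
  rintro x (rfl | rfl | rfl) <;> exact ⟨_, rfl⟩

theorem pullback_foliations_same_singular_scheme_general (d : ℕ)
    (F G : Fin 4 → R4)
    (hfolF : IsFoliation d F) (hfolG : IsFoliation d G)
    (hpF : IsPullbackFromP F) (hpG : IsPullbackFromP G)
    (hZ : satIdeal (singIdeal F) = satIdeal (singIdeal G))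
    (hCO : ∀ P Q : Fin 4 → R4, IsFoliation d P → IsFoliation d Q →
      IsPullbackFromP P → IsPullbackFromP Q →
      satIdealPlane (singIdeal P) = satIdealPlane (singIdeal Q) →
      ∃ c : ℂ, c ≠ 0 ∧ ∀ i, Q i = C c * P i) :
    satIdealPlane (singIdeal F) = satIdealPlane (singIdeal G) ∧
    ∃ c : ℂ, c ≠ 0 ∧ ∀ i, G i = C c * F i := by
  have hplane : satIdealPlane (singIdeal F) = satIdealPlane (singIdeal G) := by
    rw [← satIdealPlane_satIdeal, hZ, satIdealPlane_satIdeal]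
  exact ⟨hplane, hCO F G hfolF hfolG hpF hpG hplane⟩

/-- Let `Z ⊆ ℙ³` be the common singular scheme of two degree
`d ≠ 1` foliations `ℱ_φ`, `𝒢_ψ`, both linear pull-backs from a point `p` (here
`p = [1:0:0:0]`) of foliations `ℱ̄`, `𝒢̄` on a plane `H` (here `{z₀ = 0}`) not
containing `p`.  Then `ℱ̄` and `𝒢̄` have the same singular scheme `H ∩ Z`;
hence, by the Campillo–Olivares theorem (a reduced plane foliation of degree
`d ≠ 1` is determined by its singular scheme, taken here as the hypothesis
`hCO`), `ℱ_φ = 𝒢_ψ` up to scalar. -/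
theorem pullback_foliations_same_singular_scheme (d : ℕ) (hd : d ≠ 1)
    (F G : Fin 4 → R4)
    (hfolF : IsFoliation d F) (hfolG : IsFoliation d G)
    (hpF : IsPullbackFromP F) (hpG : IsPullbackFromP G)
    (hZ : satIdeal (singIdeal F) = satIdeal (singIdeal G))
    (hCO : ∀ P Q : Fin 4 → R4, IsFoliation d P → IsFoliation d Q →
      IsPullbackFromP P → IsPullbackFromP Q →
      satIdealPlane (singIdeal P) = satIdealPlane (singIdeal Q) →
      ∃ c : ℂ, c ≠ 0 ∧ ∀ i, Q i = C c * P i) :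
    satIdealPlane (singIdeal F) = satIdealPlane (singIdeal G) ∧
    ∃ c : ℂ, c ≠ 0 ∧ ∀ i, G i = C c * F i :=
  pullback_foliations_same_singular_scheme_general d F G hfolF hfolG hpF hpG hZ hCO

end
end

section
/- For any foliation on P² defined by a 1-form ω = F₀ dx₀ + F₁ dx₁ + F₂ dx₂ with Fᵢ homogeneous of the same degree, Σ xᵢFᵢ = 0, and singular set {F₀ = F₁ = F₂ = 0} of codimension at least two, the homogeneous ideal (F₀, F₁, F₂) ⊂ C[x₀, x₁, x₂] is saturated. -/
open MvPolynomial

noncomputable section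

local notation "R3" => MvPolynomial (Fin 3) ℂ

/-- The saturation `I^sat = ⋃ₗ (I : (x₀,x₁,x₂)ˡ)` of an ideal of
`ℂ[x₀,x₁,x₂]`. -/
def satIdeal3 (I : Ideal R3) : Ideal R3 :=
  ⨆ l : ℕ, I.colon (((Ideal.span (Set.range (X : Fin 3 → R3))) ^ l : Ideal R3) : Set R3)

/-!
Write `x = (x₀, x₁, x₂)`, `𝔪 = (x₀, x₁, x₂)` and `I = (F₀, F₁, F₂)`. The Euler relation
`x ⬝ F = 0` and exactness of the Koszul complex of `x` give `F = x × G`. As the `Fᵢ` have no common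
factor, the syzygies of `F` are exactly `R x + R G` (the Hilbert–Burch resolution of `I`).
Now let `xᵢ g ∈ I` for all `i`, say `g x = ∑ⱼ Fⱼ cⱼ`. The coordinates of the vectors `x × cⱼ` are
syzygies of `F`, so `x × cⱼ = xⱼ a + Gⱼ b`; dotting with `x` gives `x ⬝ a = x ⬝ b = 0`, hence
`a = x × D` and `b = x × C` by Koszul again. Then `cⱼ - xⱼ D - Gⱼ C` is parallel to `x`, say
equal to `Wⱼ x`, and `g = W ⬝ F ∈ I`. Thus `(I : 𝔪) = I`, and so `(I : 𝔪ˡ) = I` for every `l`.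
-/

open Matrix

namespace Ideal

variable {R : Type*} [CommRing R] {I M : Ideal R}

theorem colon_pow_le_of_colon_le (h : I.colon (M : Set R) ≤ I) (l : ℕ) :
    I.colon ((M ^ l : Ideal R) : Set R) ≤ I := by
  induction l with
  | zero => simp [one_eq_top, Submodule.colon_univ]
  | succ l ih =>
    refine fun r hr => ih (Submodule.mem_colon.mpr fun p hp => h ?_)
    refine Submodule.mem_colon.mpr fun q hq => ?_
    simpa [smul_eq_mul, mul_assoc] using
      Submodule.mem_colon.mp hr (p * q) (by rw [pow_succ]; exact mul_mem_mul hp hq)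

theorem iSup_colon_pow_eq_self (h : I.colon (M : Set R) ≤ I) :
    ⨆ l : ℕ, I.colon ((M ^ l : Ideal R) : Set R) = I :=
  le_antisymm (iSup_le (colon_pow_le_of_colon_le h)) (le_colon.trans (le_iSup_of_le 0 le_rfl))

end Ideal

section UniqueFactorization

variable {R : Type*} [CommRing R] [IsDomain R] [UniqueFactorizationMonoid R] {ι : Type*}

theorem dvd_of_forall_dvd_mul {f : ι → R} (hf : ¬∃ p, Prime p ∧ ∀ i, p ∣ f i) {a w : R}
    (ha : a ≠ 0) (h : ∀ i, a ∣ f i * w) : a ∣ w := by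
  induction a using UniqueFactorizationMonoid.induction_on_prime generalizing w with
  | h₁ => exact absurd rfl ha
  | h₂ u hu => exact hu.dvd
  | h₃ a p ha₀ hp ih =>
    obtain ⟨i, hi⟩ : ∃ i, ¬p ∣ f i := by
      by_contra! hall
      exact hf ⟨p, hp, hall⟩
    obtain ⟨w, rfl⟩ := (hp.dvd_or_dvd ((dvd_mul_right p a).trans (h i))).resolve_left hi
    refine mul_dvd_mul_left p (ih ha₀ fun j => ?_)
    rw [← mul_dvd_mul_iff_left hp.ne_zero, mul_left_comm]
    exact h j

theorem exists_eq_smul_of_mul_eq_mul {F P : ι → R} (hF : ¬∃ p, Prime p ∧ ∀ i, p ∣ F i)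
    (hF0 : F ≠ 0) (h : ∀ j k, F j * P k = F k * P j) : ∃ β : R, P = β • F := by
  obtain ⟨j, hj⟩ := Function.ne_iff.mp hF0
  obtain ⟨β, hβ⟩ := dvd_of_forall_dvd_mul hF hj fun k => ⟨P k, (h j k).symm⟩
  refine ⟨β, funext fun k => mul_left_cancel₀ hj ?_⟩
  simp only [Pi.smul_apply, smul_eq_mul]
  linear_combination h j k + F k * hβ

end UniqueFactorization

section CrossProduct

variable {R : Type*} [CommRing R]

theorem mul_eq_mul_of_cross_eq_zero {u v : Fin 3 → R} (h : u ⨯₃ v = 0) (j k : Fin 3) :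
    u j * v k = u k * v j := by
  simp only [cross_apply, cons_eq_zero_iff, sub_eq_zero] at h
  obtain ⟨h₀, h₁, h₂, -⟩ := h
  fin_cases j <;> fin_cases k <;> grind

theorem cross_cross_cross_left (x G B : Fin 3 → R) :
    (x ⨯₃ G) ⨯₃ (x ⨯₃ B) = (B ⬝ᵥ x ⨯₃ G) • x := by
  rw [cross_cross_eq_smul_sub_smul, dot_self_cross, zero_smul, zero_sub,
    triple_product_permutation G, triple_product_permutation x, ← neg_smul, ← cross_anticomm,
    dotProduct_neg, neg_neg]

variable [IsDomain R]

theorem eq_zero_of_smul_add_smul_eq_zero {x G : Fin 3 → R} (hxG : x ⨯₃ G ≠ 0) {a b : R}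
    (h : a • x + b • G = 0) : a = 0 ∧ b = 0 := by
  have hb : b • (x ⨯₃ G) = 0 := by
    simpa [map_add, map_smul] using congrArg (crossProduct x) h
  have ha : a • (G ⨯₃ x) = 0 := by
    simpa [map_add, map_smul] using congrArg (crossProduct G) h
  rw [← cross_anticomm, smul_neg, neg_eq_zero] at ha
  exact ⟨(smul_eq_zero.mp ha).resolve_right hxG, (smul_eq_zero.mp hb).resolve_right hxG⟩

variable [UniqueFactorizationMonoid R]

theorem exists_eq_smul_of_cross_eq_zero {u v : Fin 3 → R} (hu : ¬∃ p, Prime p ∧ ∀ i, p ∣ u i)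
    (hu0 : u ≠ 0) (h : u ⨯₃ v = 0) : ∃ β : R, v = β • u :=
  exists_eq_smul_of_mul_eq_mul hu hu0 (mul_eq_mul_of_cross_eq_zero h)

theorem exists_eq_smul_add_smul_of_dot_cross_eq_zero {x G B : Fin 3 → R}
    (hx : ¬∃ p, Prime p ∧ ∀ i, p ∣ x i) (hF : ¬∃ p, Prime p ∧ ∀ i, p ∣ (x ⨯₃ G) i)
    (hF0 : x ⨯₃ G ≠ 0) (hB : B ⬝ᵥ x ⨯₃ G = 0) : ∃ α β : R, B = α • x + β • G := by
  have hx0 : x ≠ 0 := by rintro rfl; simp at hF0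
  obtain ⟨β, hβ⟩ := exists_eq_smul_of_cross_eq_zero hF hF0 (v := x ⨯₃ B)
    (by rw [cross_cross_cross_left, hB, zero_smul])
  obtain ⟨α, hα⟩ := exists_eq_smul_of_cross_eq_zero hx hx0 (v := B - β • G)
    (by rw [map_sub, map_smul, hβ, sub_self])
  exact ⟨α, β, by rw [← hα, sub_add_cancel]⟩

end CrossProduct

theorem exists_sum_smul_eq_of_forall_mem_span {R ι κ : Type*} [CommRing R] [Fintype ι]
    {F : ι → R} {y : κ → R} (h : ∀ i, y i ∈ Ideal.span (Set.range F)) :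
    ∃ c : ι → κ → R, ∑ j, F j • c j = y := by
  choose c hc using fun i => Ideal.mem_span_range_iff_exists_fun.mp (h i)
  exact ⟨fun j i => c i j, funext fun i => by simp [Finset.sum_apply, ← hc i, mul_comm]⟩

section Saturation

variable {R : Type*} [CommRing R] [IsDomain R] [UniqueFactorizationMonoid R]

theorem mem_span_cross_of_forall_mul_mem {x G : Fin 3 → R}
    (hx_koszul : ∀ v, x ⬝ᵥ v = 0 → ∃ c, v = x ⨯₃ c) (hx : ¬∃ p, Prime p ∧ ∀ i, p ∣ x i)
    (hF : ¬∃ p, Prime p ∧ ∀ i, p ∣ (x ⨯₃ G) i) (hF0 : x ⨯₃ G ≠ 0) {g : R}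
    (hg : ∀ i, x i * g ∈ Ideal.span (Set.range (x ⨯₃ G))) :
    g ∈ Ideal.span (Set.range (x ⨯₃ G)) := by
  set F := x ⨯₃ G
  have hx0 : x ≠ 0 := by rintro rfl; simp [F] at hF0
  obtain ⟨c, hc⟩ := exists_sum_smul_eq_of_forall_mem_span (y := g • x)
    fun i => by simpa [mul_comm] using hg i
  have hsyz : ∀ m, ∃ a b : R, (fun j => (x ⨯₃ c j) m) = a • x + b • G := fun m =>
    exists_eq_smul_add_smul_of_dot_cross_eq_zero hx hF hF0 <| by
      calc (fun j => (x ⨯₃ c j) m) ⬝ᵥ F = (x ⨯₃ ∑ j, F j • c j) m := by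
            simp [dotProduct, map_sum, Finset.sum_apply, mul_comm]
        _ = 0 := by rw [hc, map_smul, cross_self, smul_zero, Pi.zero_apply]
  choose a b hab using hsyz
  have hcross : ∀ j, x ⨯₃ c j = x j • a + G j • b := fun j => funext fun m => by
    simpa [mul_comm] using congrFun (hab m) j
  obtain ⟨hxa, hxb⟩ : x ⬝ᵥ a = 0 ∧ x ⬝ᵥ b = 0 := by
    refine eq_zero_of_smul_add_smul_eq_zero hF0 (funext fun j => ?_)
    have := congrArg (x ⬝ᵥ ·) (hcross j)
    simp only [dot_self_cross, dotProduct_add, dotProduct_smul, smul_eq_mul] at this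
    simp only [Pi.add_apply, Pi.smul_apply, smul_eq_mul, Pi.zero_apply]
    linear_combination -this
  obtain ⟨D, rfl⟩ := hx_koszul a hxa
  obtain ⟨C, rfl⟩ := hx_koszul b hxb
  have hW : ∀ j, ∃ w : R, c j - x j • D - G j • C = w • x := fun j =>
    exists_eq_smul_of_cross_eq_zero hx hx0 (by simp [map_sub, map_smul, hcross j])
  choose W hW using hW
  have : g • x = (W ⬝ᵥ F) • x := by
    calc g • x = ∑ j, F j • c j := hc.symm
      _ = ∑ j, F j • (W j • x + (x j • D + G j • C)) := by
          simp only [← hW, sub_sub, sub_add_cancel]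
      _ = (W ⬝ᵥ F) • x + (x ⬝ᵥ F) • D + (G ⬝ᵥ F) • C := by
          simp only [smul_add, smul_smul, Finset.sum_add_distrib, dotProduct, Finset.sum_smul,
            mul_comm, add_assoc]
      _ = (W ⬝ᵥ F) • x := by simp [F]
  rw [smul_left_injective R hx0 this]
  exact Ideal.mem_span_range_iff_exists_fun.mpr ⟨W, rfl⟩

end Saturation

namespace MvPolynomial

variable {K : Type*} [CommRing K]

theorem X_dvd_sub_aeval_update {σ : Type*} [DecidableEq σ] (i : σ) (p : MvPolynomial σ K) :
    X i ∣ p - aeval (Function.update X i 0) p := by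
  induction p using MvPolynomial.induction_on with
  | C a => simp
  | add p q hp hq => simpa [add_sub_add_comm] using dvd_add hp hq
  | mul_X p j hp =>
    rcases eq_or_ne j i with rfl | hj
    · simp
    · simpa [hj, ← sub_mul] using hp.mul_right (X j)

variable [IsDomain K]

theorem exists_eq_X_cross_of_X_dot_eq_zero {v : Fin 3 → MvPolynomial (Fin 3) K}
    (hv : X ⬝ᵥ v = 0) : ∃ c, v = X ⨯₃ c := by
  rw [vec3_dotProduct] at hv
  set σ := aeval (R := K) (Function.update (X : Fin 3 → MvPolynomial (Fin 3) K) 2 0)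
  have hσ : X 0 * σ (v 0) + X 1 * σ (v 1) = 0 := by
    simpa [σ, Function.update] using congrArg σ hv
  obtain ⟨q, hq⟩ : X 0 ∣ σ (v 1) :=
    (X_prime.dvd_or_dvd (a := X 1) ⟨-σ (v 0), by linear_combination hσ⟩).resolve_left
      (by rw [X_dvd_X]; decide)
  obtain ⟨a₀, ha₀⟩ : X 2 ∣ v 0 - σ (v 0) := X_dvd_sub_aeval_update 2 (v 0)
  obtain ⟨a₁, ha₁⟩ : X 2 ∣ v 1 - σ (v 1) := X_dvd_sub_aeval_update 2 (v 1)
  have hσ₀ : σ (v 0) = -(X 1 * q) :=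
    mul_left_cancel₀ (X_ne_zero 0) (by linear_combination hσ - X 1 * hq)
  have hv₂ : v 2 = -(X 0 * a₀ + X 1 * a₁) :=
    mul_left_cancel₀ (X_ne_zero 2) <| by
      linear_combination hv - X 0 * ha₀ - X 1 * ha₁ - X 0 * hσ₀ - X 1 * hq
  refine ⟨![a₁, -a₀, -q], ?_⟩
  ext i : 1
  fin_cases i <;> simp only [Fin.zero_eta, Fin.mk_one, Fin.reduceFinMk, cross_apply, cons_val]
  · linear_combination ha₀ + hσ₀
  · linear_combination ha₁ + hq
  · linear_combination hv₂

theorem not_exists_prime_dvd_X :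
    ¬∃ p : MvPolynomial (Fin 3) K, Prime p ∧ ∀ i, p ∣ X i := by
  rintro ⟨p, hp, hdvd⟩
  have h01 : (X 0 : MvPolynomial (Fin 3) K) ∣ X 1 :=
    (hp.irreducible.dvd_symm X_prime.irreducible (hdvd 0)).trans (hdvd 1)
  exact absurd (X_dvd_X.mp h01) (by decide)

end MvPolynomial

theorem plane_foliation_ideal_saturated_general (F : Fin 3 → R3)
    (heuler : ∑ i, X i * F i = 0)
    (hcodim : ¬ ∃ p : R3, Prime p ∧ ∀ i, p ∣ F i) :
    satIdeal3 (Ideal.span (Set.range F)) = Ideal.span (Set.range F) := by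
  obtain ⟨G, rfl⟩ := exists_eq_X_cross_of_X_dot_eq_zero heuler
  have hF0 : X ⨯₃ G ≠ 0 := fun h => hcodim ⟨X 0, X_prime, fun i => by simp [h]⟩
  refine Ideal.iSup_colon_pow_eq_self fun g hg => ?_
  rw [Ideal.colon_span, Submodule.mem_colon] at hg
  exact mem_span_cross_of_forall_mul_mem (fun _ => exists_eq_X_cross_of_X_dot_eq_zero)
    not_exists_prime_dvd_X hcodim hF0 fun i => by simpa [mul_comm] using hg (X i) ⟨i, rfl⟩

/-- For any foliation on `ℙ²` defined by a `1`-form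
`ω = F₀ dx₀ + F₁ dx₁ + F₂ dx₂` with the `Fᵢ` homogeneous of the same degree,
`∑ xᵢFᵢ = 0`, and singular set `{F₀ = F₁ = F₂ = 0}` of codimension at least
two (equivalently, the `Fᵢ` have no common prime factor), the homogeneous
ideal `(F₀, F₁, F₂) ⊆ ℂ[x₀,x₁,x₂]` is saturated. -/
theorem plane_foliation_ideal_saturated (m : ℕ) (F : Fin 3 → R3)
    (hhom : ∀ i, (F i).IsHomogeneous m)
    (heuler : ∑ i, X i * F i = 0)
    (hcodim : ¬ ∃ p : R3, Prime p ∧ ∀ i, p ∣ F i) :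
    satIdeal3 (Ideal.span (Set.range F)) = Ideal.span (Set.range F) :=
  plane_foliation_ideal_saturated_general F heuler hcodim

end
end
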